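/- arXiv:1212.5788 — 10 statements merged into one kernel-verified Lean document; each statement's English description precedes it below -/
import Mathlib

section
/- Let K be a field of characteristic p > 0, let m > 0, and let ∂ = (∂_n)_{0 ≤ n < p^m} be an iterative m-truncated HS-derivation (a G_a[m]-derivation) on K such that ∂_1 is not the zero map. Then there exists x ∈ K such that ∂_1(x) = 1 and ∂_n(x) = 0 for all n with 2 ≤ n ≤ p^m − 1. -/
/-!
A nonzero `D 1` is nilpotent, as `(D 1)^[i] = i! • D i` and hence `(D 1)^[p] = 0`; the last
nonzero iterate of `D 1` gives `x` with `D 1 x = 1` and `D i x = 0` for `2 ≤ i < p`.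
Since `y ↦ ∑ D n y Xⁿ` is multiplicative modulo `X ^ p ^ m`, `D n (y ^ p)` vanishes unless
`p ∣ n`, and `D (p * n) (y ^ p) = (D n y) ^ p`. Starting from `w = 1` and passing from `w` to
`x ^ (p - 1) * w ^ p`, the relation `D (p ^ (k+1) - p) ∘ D (p - 1) = c • D (p ^ (k+1) - 1)` then
yields `v` with `D (p ^ m - 1) v ≠ 0`. Finally `a = D (p ^ m - 2) v` and `b = D (p ^ m - 1) v`
satisfy `D 1 a = -b`, `D j a = 0` for `j ≥ 2` and `D j b = 0` for `j ≥ 1`, so `-a / b` is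
canonical.
-/

open Finset

/-- `D` is an `m`-truncated HS-derivation on `R` (for the prime `p`):
only the maps `D n` for `n < p ^ m` are relevant. -/
def IsTruncHSDeriv (p m : ℕ) {R : Type*} [CommRing R] (D : ℕ → R → R) : Prop :=
  (∀ n, n < p ^ m → ∀ x y, D n (x + y) = D n x + D n y) ∧
  (∀ x, D 0 x = x) ∧
  (∀ n, n < p ^ m → ∀ x y, D n (x * y) = ∑ ij ∈ Finset.HasAntidiagonal.antidiagonal n, D ij.1 x * D ij.2 y)

/-- `D` is an iterative `m`-truncated HS-derivation (a `G_a[m]`-derivation). -/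
def IsGaIterativeTrunc (p m : ℕ) {R : Type*} [CommRing R] (D : ℕ → R → R) : Prop :=
  (∀ i j : ℕ, i < p ^ m → j < p ^ m → i + j < p ^ m →
    ∀ x, D i (D j x) = (i + j).choose i • D (i + j) x) ∧
  (∀ i j : ℕ, i < p ^ m → j < p ^ m → p ^ m ≤ i + j → ∀ x, D i (D j x) = 0)

open Polynomial
open scoped Nat

theorem Polynomial.coeff_eq_of_X_pow_dvd_sub {R : Type*} [CommRing R] {f g : R[X]} {N n : ℕ}
    (h : X ^ N ∣ f - g) (hn : n < N) : f.coeff n = g.coeff n := by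
  simpa [sub_eq_zero] using X_pow_dvd_iff.1 h n hn

theorem Function.exists_apply_ne_zero_apply_apply_eq_zero {α : Type*} [Zero α]
    (f : α → α) {n : ℕ} {z : α} (hn : f^[n] (f z) = 0) (hz : f z ≠ 0) :
    ∃ u, f u ≠ 0 ∧ f (f u) = 0 := by
  induction n generalizing z with
  | zero => exact absurd hn hz
  | succ n ih =>
    by_cases h : f (f z) = 0
    · exact ⟨z, hz, h⟩
    · exact ih hn h

noncomputable def truncSeries {R : Type*} [CommRing R] (D : ℕ → R → R) (N : ℕ) (x : R) :
    R[X] :=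
  ∑ n ∈ range N, C (D n x) * X ^ n

theorem coeff_truncSeries {R : Type*} [CommRing R] (D : ℕ → R → R) (N : ℕ) (x : R)
    (n : ℕ) :
    (truncSeries D N x).coeff n = if n < N then D n x else 0 := by
  simp [truncSeries, coeff_X_pow]

theorem IsGaIterativeTrunc.map_map_eq_zero_of_dvd_choose {p m : ℕ} {R : Type*}
    [CommRing R] [CharP R p] {D : ℕ → R → R} (hiter : IsGaIterativeTrunc p m D) {i j : ℕ}
    (hi : i < p ^ m) (hj : j < p ^ m) (hp : p ∣ (i + j).choose i) (x : R) : D i (D j x) = 0 := by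
  rcases lt_or_ge (i + j) (p ^ m) with h | h
  · rw [hiter.1 i j hi hj h, nsmul_eq_mul, (CharP.cast_eq_zero_iff R p _).2 hp, zero_mul]
  · exact hiter.2 i j hi hj h x

namespace IsTruncHSDeriv

section CommRing

variable {p m : ℕ} {R : Type*} [CommRing R] {D : ℕ → R → R}

theorem map_neg (hd : IsTruncHSDeriv p m D) {n : ℕ} (hn : n < p ^ m) (x : R) :
    D n (-x) = -D n x :=
  (AddMonoidHom.mk' (D n) (hd.1 n hn)).map_neg x

theorem map_nsmul (hd : IsTruncHSDeriv p m D) {n : ℕ} (hn : n < p ^ m) (k : ℕ) (x : R) :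
    D n (k • x) = k • D n x :=
  (AddMonoidHom.mk' (D n) (hd.1 n hn)).map_nsmul k x

theorem map_mul_of_map_eq_zero (hd : IsTruncHSDeriv p m D) {n : ℕ} (hn : n < p ^ m) (x : R)
    {c : R} (hc : ∀ j, 0 < j → j ≤ n → D j c = 0) : D n (x * c) = D n x * c := by
  rw [hd.2.2 n hn, Finset.sum_eq_single (n, 0), hd.2.1]
  · rintro ⟨i, j⟩ hij hne
    rw [HasAntidiagonal.mem_antidiagonal] at hij
    rw [hc j (by grind) (by omega), mul_zero]
  · simp

theorem map_one_of_pos (hd : IsTruncHSDeriv p m D) {n : ℕ} (h0 : 0 < n) (hn : n < p ^ m) :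
    D n 1 = 0 := by
  induction n using Nat.strong_induction_on with
  | _ n ih =>
    have h := hd.2.2 n hn 1 1
    rw [Finset.sum_eq_add (0, n) (n, 0) (by grind)] at h
    · simp only [mul_one, hd.2.1, one_mul] at h
      linear_combination -h
    · rintro ⟨i, j⟩ hij hne
      rw [HasAntidiagonal.mem_antidiagonal] at hij
      rw [ih i (by grind) (by grind) (by omega), zero_mul]
    · simp
    · simp

theorem iterate_map_one (hd : IsTruncHSDeriv p m D) (hiter : IsGaIterativeTrunc p m D) {i : ℕ}
    (hi : i < p ^ m) (x : R) : (D 1)^[i] x = i ! • D i x := by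
  induction i with
  | zero => simp [hd.2.1]
  | succ i ih =>
    rw [Function.iterate_succ_apply', ih (by omega), hd.map_nsmul (by omega),
      hiter.1 1 i (by omega) (by omega) (by omega), smul_smul, Nat.choose_one_right,
      add_comm 1 i, Nat.factorial_succ, mul_comm]

theorem iterate_map_one_prime_eq_zero [CharP R p] (hd : IsTruncHSDeriv p m D)
    (hiter : IsGaIterativeTrunc p m D) (hp : p.Prime) (hm : 0 < m) (x : R) :
    (D 1)^[p] x = 0 := by
  have hpm : p ≤ p ^ m := Nat.le_self_pow hm.ne' p
  have h1 : 1 < p ^ m := hp.one_lt.trans_le hpm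
  obtain ⟨k, rfl⟩ : ∃ k, p = k + 1 := ⟨p - 1, by have := hp.pos; omega⟩
  rw [Function.iterate_succ_apply', hd.iterate_map_one hiter (by omega), hd.map_nsmul (by omega),
    hiter.map_map_eq_zero_of_dvd_choose (by omega) (by omega) (by simp [add_comm]), smul_zero]

theorem X_pow_dvd_truncSeries_mul_sub (hd : IsTruncHSDeriv p m D) (x y : R) :
    X ^ p ^ m ∣
      truncSeries D (p ^ m) (x * y) - truncSeries D (p ^ m) x * truncSeries D (p ^ m) y := by
  refine X_pow_dvd_iff.2 fun n hn => ?_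
  rw [coeff_sub, sub_eq_zero, coeff_mul, coeff_truncSeries, if_pos hn, hd.2.2 n hn]
  refine Finset.sum_congr rfl fun ij hij => ?_
  rw [HasAntidiagonal.mem_antidiagonal] at hij
  rw [coeff_truncSeries, coeff_truncSeries, if_pos (by omega), if_pos (by omega)]

theorem X_pow_dvd_truncSeries_pow_sub (hd : IsTruncHSDeriv p m D) (x : R) (k : ℕ) :
    X ^ p ^ m ∣ truncSeries D (p ^ m) (x ^ k) - truncSeries D (p ^ m) x ^ k := by
  induction k with
  | zero =>
    refine X_pow_dvd_iff.2 fun n hn => ?_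
    rw [pow_zero, pow_zero, coeff_sub, coeff_truncSeries, if_pos hn, coeff_one, sub_eq_zero]
    rcases n.eq_zero_or_pos with rfl | h0
    · simp [hd.2.1]
    · simp [hd.map_one_of_pos h0 hn, h0.ne']
  | succ k ih =>
    have h := dvd_add (hd.X_pow_dvd_truncSeries_mul_sub x (x ^ k))
      (dvd_mul_of_dvd_right ih (truncSeries D (p ^ m) x))
    rw [pow_succ', pow_succ']
    convert h using 1
    ring

theorem map_pow_eq_mul_choose (hd : IsTruncHSDeriv p m D) {N : ℕ} (hN : N ≤ p ^ m) {x : R}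
    (hx1 : D 1 x = 1) (hx : ∀ i, 2 ≤ i → i < N → D i x = 0) (k : ℕ) {n : ℕ}
    (hn : n < N) :
    D n (x ^ k) = x ^ (k - n) * k.choose n := by
  have hlin : X ^ N ∣ truncSeries D (p ^ m) x - (X + C x) := by
    refine X_pow_dvd_iff.2 fun i hi => ?_
    rw [coeff_sub, coeff_truncSeries, if_pos (by omega), coeff_add, coeff_X, coeff_C]
    rcases i with _ | _ | i
    · simp [hd.2.1]
    · simp [hx1]
    · simp [hx (i + 2) (by omega) hi]
  have h := dvd_add (dvd_trans (pow_dvd_pow X hN) (hd.X_pow_dvd_truncSeries_pow_sub x k))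
    (dvd_trans hlin (sub_dvd_pow_sub_pow _ _ k))
  rw [sub_add_sub_cancel] at h
  rw [← coeff_X_add_C_pow, ← coeff_eq_of_X_pow_dvd_sub h hn, coeff_truncSeries,
    if_pos (by omega)]

theorem map_pow_char [CharP R p] (hp : p.Prime) (hd : IsTruncHSDeriv p m D) (x : R) {n : ℕ}
    (hn : n < p ^ m) : D n (x ^ p) = if p ∣ n then D (n / p) x ^ p else 0 := by
  have := Fact.mk hp
  have h := coeff_eq_of_X_pow_dvd_sub (hd.X_pow_dvd_truncSeries_pow_sub x p) hn
  rw [coeff_truncSeries, if_pos hn, ← map_frobenius_expand, coeff_map, coeff_expand hp.pos,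
    coeff_truncSeries] at h
  rw [h]
  split_ifs with hdvd hlt
  · rfl
  · exact absurd ((Nat.div_le_self n p).trans_lt hn) hlt
  · exact zero_pow hp.ne_zero

theorem exists_map_pred_pow_ne_zero [CharP R p] [IsReduced R] (hd : IsTruncHSDeriv p m D)
    (hiter : IsGaIterativeTrunc p m D) (hp : p.Prime) {x : R} (hx1 : D 1 x = 1)
    (hx : ∀ i, 2 ≤ i → i < p → D i x = 0) {k : ℕ} (hk : k ≤ m) :
    ∃ v, D (p ^ k - 1) v ≠ 0 := by
  induction k with
  | zero =>
    have := CharP.nontrivial_of_char_ne_one (R := R) hp.one_lt.ne'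
    exact ⟨1, by simp [hd.2.1]⟩
  | succ k ih =>
    obtain ⟨w, hw⟩ := ih (by omega)
    have hp2 := hp.two_le
    have hpk : p ^ (k + 1) ≤ p ^ m := Nat.pow_le_pow_right hp.pos hk
    have hp_le : p ≤ p ^ (k + 1) := Nat.le_self_pow k.succ_ne_zero p
    have hlow : D (p - 1) (x ^ (p - 1) * w ^ p) = w ^ p := by
      rw [hd.map_mul_of_map_eq_zero (by omega) _ fun j hj hjp => ?_,
        hd.map_pow_eq_mul_choose (hp_le.trans hpk) hx1 hx _ (by omega)]
      · simp
      rw [hd.map_pow_char hp w (by omega), if_neg (Nat.not_dvd_of_pos_of_lt hj (by omega))]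
    have hhigh : D (p ^ (k + 1) - p) (w ^ p) = D (p ^ k - 1) w ^ p := by
      have hmul : p ^ (k + 1) - p = p * (p ^ k - 1) := by rw [Nat.mul_sub_one, pow_succ']
      rw [hd.map_pow_char hp w (by omega), if_pos (hmul ▸ dvd_mul_right p _), hmul,
        Nat.mul_div_cancel_left _ hp.pos]
    refine ⟨x ^ (p - 1) * w ^ p, fun h => hw (IsReduced.eq_zero _ ⟨p, ?_⟩)⟩
    have hcomp := hiter.1 (p ^ (k + 1) - p) (p - 1) (by omega) (by omega) (by omega)
      (x ^ (p - 1) * w ^ p)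
    rwa [hlow, hhigh, show p ^ (k + 1) - p + (p - 1) = p ^ (k + 1) - 1 by omega, h,
      smul_zero] at hcomp

end CommRing

section Field

variable {p m : ℕ} {K : Type*} [Field K] {D : ℕ → K → K}

theorem map_inv_eq_zero (hd : IsTruncHSDeriv p m D) {n : ℕ} (h0 : 0 < n) (hn : n < p ^ m)
    {c : K} (hc0 : c ≠ 0) (hc : ∀ j, 0 < j → j ≤ n → D j c = 0) : D n c⁻¹ = 0 := by
  have h := hd.map_mul_of_map_eq_zero hn c⁻¹ hc
  rw [inv_mul_cancel₀ hc0, hd.map_one_of_pos h0 hn] at h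
  exact (mul_eq_zero.1 h.symm).resolve_right hc0

theorem exists_map_one_eq_one [CharP K p] (hd : IsTruncHSDeriv p m D)
    (hiter : IsGaIterativeTrunc p m D) (hp : p.Prime) (hm : 0 < m) (hne : D 1 ≠ 0) :
    ∃ x, D 1 x = 1 ∧ ∀ i, 2 ≤ i → i < p → D i x = 0 := by
  have hpm : p ≤ p ^ m := Nat.le_self_pow hm.ne' p
  have h1 : 1 < p ^ m := hp.one_lt.trans_le hpm
  obtain ⟨z, hz⟩ := Function.ne_iff.1 hne
  obtain ⟨u, hu, huu⟩ := Function.exists_apply_ne_zero_apply_apply_eq_zero (D 1) (n := p - 1)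
    (by rw [← Function.iterate_succ_apply, Nat.succ_eq_add_one, Nat.sub_add_cancel hp.pos,
      hd.iterate_map_one_prime_eq_zero hiter hp hm]) hz
  have hx : D 1 (u * (D 1 u)⁻¹) = 1 := by
    rw [hd.map_mul_of_map_eq_zero h1 u fun j hj hj1 => ?_, mul_inv_cancel₀ hu]
    obtain rfl : j = 1 := by omega
    refine hd.map_inv_eq_zero one_pos h1 hu fun j hj hj1 => ?_
    obtain rfl : j = 1 := by omega
    exact huu
  refine ⟨_, hx, fun i hi2 hip => ?_⟩
  have h := hd.iterate_map_one hiter (x := u * (D 1 u)⁻¹) (i := i) (by omega)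
  obtain ⟨k, rfl⟩ : ∃ k, i = k + 1 := ⟨i - 1, by omega⟩
  rw [Function.iterate_succ_apply, hx, hd.iterate_map_one hiter (by omega),
    hd.map_one_of_pos (by omega) (by omega), smul_zero, nsmul_eq_mul] at h
  have hfac : ((k + 1)! : K) ≠ 0 := by
    rw [Ne, CharP.cast_eq_zero_iff K p, hp.dvd_factorial]
    omega
  exact (mul_eq_zero.1 h.symm).resolve_left hfac

theorem exists_canonical_of_map_pred_ne_zero [CharP K p] (hd : IsTruncHSDeriv p m D)
    (hiter : IsGaIterativeTrunc p m D) (hq : 1 < p ^ m) {v : K} (hv : D (p ^ m - 1) v ≠ 0) :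
    ∃ x, D 1 x = 1 ∧ ∀ n, 2 ≤ n → n < p ^ m → D n x = 0 := by
  set a := D (p ^ m - 2) v
  set b := D (p ^ m - 1) v
  have ha : ∀ j, 2 ≤ j → j < p ^ m → D j a = 0 := fun j hj2 hj =>
    hiter.2 j _ hj (by omega) (by omega) v
  have hb : ∀ j, 0 < j → j < p ^ m → D j b = 0 := fun j hj0 hj =>
    hiter.2 j _ hj (by omega) (by omega) v
  have hbinv : ∀ j, 0 < j → j < p ^ m → D j b⁻¹ = 0 := fun j hj0 hj =>
    hd.map_inv_eq_zero hj0 hj hv fun i hi0 hij => hb i hi0 (by omega)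
  have ha1 : D 1 a = -b := by
    have hm : m ≠ 0 := by rintro rfl; simp at hq
    have hcast : ((p ^ m - 1 : ℕ) : K) = -1 := by
      rw [Nat.cast_sub hq.le, Nat.cast_pow, CharP.cast_eq_zero, zero_pow hm, Nat.cast_one, zero_sub]
    rw [hiter.1 1 _ hq (by omega) (by omega), show 1 + (p ^ m - 2) = p ^ m - 1 by omega,
      Nat.choose_one_right, nsmul_eq_mul, hcast, neg_one_mul]
  refine ⟨-(a * b⁻¹), ?_, fun n hn2 hn => ?_⟩
  · rw [hd.map_neg hq, hd.map_mul_of_map_eq_zero hq _ fun j hj0 hj => hbinv j hj0 (by omega), ha1,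
      neg_mul, neg_neg, mul_inv_cancel₀ hv]
  · rw [hd.map_neg hn, hd.map_mul_of_map_eq_zero hn _ fun j hj0 hj => hbinv j hj0 (by omega),
      ha n hn2 hn, zero_mul, neg_zero]

end Field

end IsTruncHSDeriv

/-- A `G_a[m]`-derivation on a field of characteristic `p > 0` with `d 1 ≠ 0` admits a
canonical element: an `x` with `d 1 x = 1` and `d n x = 0` for `2 ≤ n ≤ p ^ m - 1`. -/
theorem ga_trunc_canonical_element (p : ℕ) (hp : p.Prime) (m : ℕ) (hm : 0 < m)
    (K : Type*) [Field K] [CharP K p]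
    (d : ℕ → K → K)
    (hd : IsTruncHSDeriv p m d)
    (hiter : IsGaIterativeTrunc p m d)
    (hne : d 1 ≠ 0) :
    ∃ x : K, d 1 x = 1 ∧ ∀ n : ℕ, 2 ≤ n → n ≤ p ^ m - 1 → d n x = 0 := by
  have hq : 1 < p ^ m := Nat.one_lt_pow hm.ne' hp.one_lt
  obtain ⟨x, hx1, hx⟩ := hd.exists_map_one_eq_one hiter hp hm hne
  obtain ⟨v, hv⟩ := hd.exists_map_pred_pow_ne_zero hiter hp hx1 hx le_rfl
  obtain ⟨y, hy1, hy⟩ := hd.exists_canonical_of_map_pred_ne_zero hiter hq hv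
  exact ⟨y, hy1, fun n hn2 hn => hy n hn2 (by omega)⟩
end

section
/- Let K be a field of characteristic p > 0, let m > 0, and let ∂ = (∂_n)_{0 ≤ n < p^m} be a multiplicatively iterative m-truncated HS-derivation (a G_m[m]-derivation) on K such that ∂_1 is not the zero map. Then there exists x ∈ K such that ∂_1(x) = x + 1, x + 1 ≠ 0, and ∂_n(x) = 0 for all n with 2 ≤ n ≤ p^m − 1. -/
/-! A `G_m[m]`-derivation behaves like a truncated `𝔾ₘ`-action: `d n` acts as `choose D n`
for a grading operator `D` with values in `ℤ/p^m`. Binomial inversion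
`∑ₙ (-1)^(n+i) (n choose i) d n` projects onto the part of weight `i`, and these projections
add up to the identity. As `d 1` acts on weight `i` by `i`, the hypothesis `d 1 ≠ 0` yields a
nonzero `y` of some weight `i` with `p ∤ i`. Weights add under multiplication and, by Lucas'
theorem, only matter modulo `p ^ m`; so for `i * t ≡ 1 [MOD p ^ m]` the element `u = y ^ t` has
weight `1`, i.e. `d 1 u = u` and `d n u = 0` for `n ≥ 2`, and `x = u - 1` is the required
element. -/

open Finset

/-- The coefficient `n! / ((n-i)!·(n-j)!·(i+j-n)!)` appearing in the multiplicative
iterativity rule. -/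
def gmCoeff (i j n : ℕ) : ℕ :=
  n.factorial / ((n - i).factorial * ((n - j).factorial * (i + j - n).factorial))

/-- `D` is a multiplicatively iterative `m`-truncated HS-derivation
(a `G_m[m]`-derivation). -/
def IsGmIterativeTrunc (p m : ℕ) {R : Type*} [CommRing R] (D : ℕ → R → R) : Prop :=
  ∀ i j : ℕ, i < p ^ m → j < p ^ m → ∀ x,
    D j (D i x) = ∑ n ∈ Finset.Icc (max i j) (min (i + j) (p ^ m - 1)), gmCoeff i j n • D n x

theorem Nat.choose_modEq_choose_of_modEq_pow {p m a b n : ℕ} [Fact p.Prime]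
    (hab : a ≡ b [MOD p ^ m]) (hn : n < p ^ m) :
    (a.choose n : ℤ) ≡ b.choose n [ZMOD p] := by
  have hdigit : ∀ i ∈ range m, a / p ^ i % p = b / p ^ i % p := fun i hi => by
    have hab' : a ≡ b [MOD p ^ (i + 1)] := hab.of_dvd (pow_dvd_pow p (mem_range.1 hi))
    rw [← Nat.mod_mul_right_div_self, ← Nat.mod_mul_right_div_self, ← pow_succ, hab']
  calc (a.choose n : ℤ)
      ≡ ((a / p ^ m).choose (n / p ^ m) : ℕ) * (∏ i ∈ range m,
          (a / p ^ i % p).choose (n / p ^ i % p) : ℕ) [ZMOD p] :=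
        Choose.choose_modEq_choose_mul_prod_range_choose m
    _ = ((b / p ^ m).choose (n / p ^ m) : ℕ) * (∏ i ∈ range m,
          (b / p ^ i % p).choose (n / p ^ i % p) : ℕ) := by
        rw [Nat.div_eq_of_lt hn, prod_congr rfl fun i hi => by rw [hdigit i hi]]
        simp
    _ ≡ b.choose n [ZMOD p] := (Choose.choose_modEq_choose_mul_prod_range_choose m).symm

open Polynomial in
theorem sum_range_alternating_choose_mul_choose_sub {i j k : ℕ} (hjk : j ≤ k) :
    ∑ s ∈ range (j + 1), (-1 : ℤ) ^ s * j.choose s * (k - s).choose i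
      = if j ≤ i then ((k - j).choose (i - j) : ℤ) else 0 := by
  have hpoly : (X : ℤ[X]) ^ j * (X + 1) ^ (k - j)
      = ∑ s ∈ range (j + 1), C ((-1 : ℤ) ^ s * j.choose s) * (X + 1) ^ (k - s) := by
    calc (X : ℤ[X]) ^ j * (X + 1) ^ (k - j) = (-1 + (X + 1)) ^ j * (X + 1) ^ (k - j) := by ring
      _ = _ := by
        rw [add_pow, sum_mul]
        refine sum_congr rfl fun s hs => ?_
        rw [show k - s = (j - s) + (k - j) by have := mem_range.1 hs; omega, pow_add]
        simp only [map_mul, map_pow, map_neg, map_one, map_natCast]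
        ring
  have := congrArg (coeff · i) hpoly
  simp only [coeff_X_pow_mul', coeff_X_add_one_pow, finsetSum_coeff, coeff_C_mul] at this
  exact this.symm

theorem gmCoeff_eq_choose_mul_choose {n j k : ℕ} (hnk : n ≤ k) (hjk : j ≤ k)
    (hk : k ≤ n + j) :
    gmCoeff n j k = k.choose j * j.choose (k - n) := by
  have e1 := Nat.choose_mul_factorial_mul_factorial hjk
  have e2 := Nat.choose_mul_factorial_mul_factorial (show k - n ≤ j by omega)
  rw [show j - (k - n) = n + j - k by omega] at e2
  have hfac : k.factorial = (k.choose j * j.choose (k - n)) *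
      ((k - n).factorial * ((k - j).factorial * (n + j - k).factorial)) := by
    rw [← e1, ← e2]; ring
  rw [gmCoeff, hfac, Nat.mul_div_cancel _ (by positivity)]

theorem sum_Icc_alternating_choose_mul_gmCoeff {i j k : ℕ} (hjk : j ≤ k) :
    ∑ n ∈ Icc (k - j) k, (-1 : ℤ) ^ (n + i) * n.choose i * gmCoeff n j k
      = (-1) ^ (k + i) * i.choose j * k.choose i := by
  have hIcc : Icc (k - j) k = (range (j + 1)).image (k - ·) := by
    ext n
    simp only [mem_Icc, mem_image, mem_range]
    exact ⟨fun h => ⟨k - n, by omega, by omega⟩, by rintro ⟨s, hs, rfl⟩; omega⟩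
  rw [hIcc, sum_image fun a ha b hb hab => by
    simp only [coe_range, Set.mem_Iio] at ha hb hab; omega]
  calc ∑ s ∈ range (j + 1), (-1 : ℤ) ^ (k - s + i) * (k - s).choose i * gmCoeff (k - s) j k
      = (-1) ^ (k + i) * k.choose j *
          ∑ s ∈ range (j + 1), (-1 : ℤ) ^ s * j.choose s * (k - s).choose i := by
        rw [mul_sum]
        refine sum_congr rfl fun s hs => ?_
        have hs : s ≤ j := Nat.lt_succ_iff.1 (mem_range.1 hs)
        have hsign : (-1 : ℤ) ^ (k + i) = (-1) ^ (k - s + i) * (-1) ^ s := by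
          rw [← pow_add]; congr 1; omega
        rw [gmCoeff_eq_choose_mul_choose (by omega) hjk (by omega), Nat.sub_sub_self (by omega),
          hsign]
        push_cast
        have hsq : (-1 : ℤ) ^ s * (-1) ^ s = 1 := by rw [← mul_pow]; simp
        linear_combination
          -(-1 : ℤ) ^ (k - s + i) * (k - s).choose i * k.choose j * j.choose s * hsq
    _ = (-1) ^ (k + i) * i.choose j * k.choose i := by
        rw [sum_range_alternating_choose_mul_choose_sub hjk]
        split_ifs with hji
        · rw [mul_assoc, ← Nat.cast_mul, ← Nat.choose_mul hji, Nat.cast_mul]; ring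
        · rw [Nat.choose_eq_zero_of_lt (not_le.1 hji)]; simp

section GmDerivation

variable {R : Type*} [CommRing R] {p m : ℕ} {d : ℕ → R → R}

namespace IsTruncHSDeriv

theorem map_sum (hd : IsTruncHSDeriv p m d) {n : ℕ} (hn : n < p ^ m) {ι : Type*}
    (s : Finset ι) (f : ι → R) :
    d n (∑ i ∈ s, f i) = ∑ i ∈ s, d n (f i) :=
  _root_.map_sum (AddMonoidHom.mk' (d n) (hd.1 n hn)) f s

theorem map_zsmul (hd : IsTruncHSDeriv p m d) {n : ℕ} (hn : n < p ^ m) (c : ℤ) (x : R) :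
    d n (c • x) = c • d n x :=
  _root_.map_zsmul (AddMonoidHom.mk' (d n) (hd.1 n hn)) c x

theorem map_sub (hd : IsTruncHSDeriv p m d) {n : ℕ} (hn : n < p ^ m) (x y : R) :
    d n (x - y) = d n x - d n y :=
  _root_.map_sub (AddMonoidHom.mk' (d n) (hd.1 n hn)) x y

end IsTruncHSDeriv

/-- `y` transforms under `d` like the power `t ^ a` of the coordinate `t` of `𝔾ₘ`. -/
def IsWeightVector (p m : ℕ) (d : ℕ → R → R) (a : ℕ) (y : R) : Prop :=
  ∀ n < p ^ m, d n y = (a.choose n : R) * y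

theorem IsTruncHSDeriv.isWeightVector_one (hd : IsTruncHSDeriv p m d) :
    IsWeightVector p m d 0 1 := by
  intro n hn
  induction n using Nat.strong_induction_on with
  | _ n ih =>
    rcases n.eq_zero_or_pos with rfl | hpos
    · simp [hd.2.1]
    have hvanish : ∀ i ∈ range n, i ≠ 0 → d i (1 : R) * d (n - i) 1 = 0 := fun i hi _ => by
      have hin := mem_range.1 hi
      rw [ih i hin (by omega), Nat.choose_eq_zero_of_lt (by omega)]
      simp
    have h := hd.2.2 n hn 1 1
    rw [mul_one, Nat.sum_antidiagonal_eq_sum_range_succ_mk, sum_range_succ,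
      sum_eq_single_of_mem 0 (mem_range.2 hpos) hvanish] at h
    simp only [Nat.sub_zero, Nat.sub_self, hd.2.1, one_mul, mul_one] at h
    rw [Nat.choose_eq_zero_of_lt hpos]
    linear_combination -h

theorem IsWeightVector.mul (hd : IsTruncHSDeriv p m d) {a b : ℕ} {y z : R}
    (hy : IsWeightVector p m d a y) (hz : IsWeightVector p m d b z) :
    IsWeightVector p m d (a + b) (y * z) := by
  intro n hn
  rw [hd.2.2 n hn, Nat.add_choose_eq, Nat.cast_sum, sum_mul]
  refine sum_congr rfl fun uv huv => ?_
  have huv : uv.1 + uv.2 = n := mem_antidiagonal.1 huv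
  rw [hy uv.1 (by omega), hz uv.2 (by omega)]
  push_cast
  ring

theorem IsWeightVector.pow (hd : IsTruncHSDeriv p m d) {a : ℕ} {y : R}
    (hy : IsWeightVector p m d a y) (t : ℕ) : IsWeightVector p m d (a * t) (y ^ t) := by
  induction t with
  | zero => simpa using hd.isWeightVector_one
  | succ t ih => rw [pow_succ, mul_add_one]; exact ih.mul hd hy

theorem IsWeightVector.of_modEq [CharP R p] [Fact p.Prime] {a b : ℕ} {y : R}
    (hy : IsWeightVector p m d a y) (hab : a ≡ b [MOD p ^ m]) : IsWeightVector p m d b y := by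
  intro n hn
  rw [hy n hn]
  congr 1
  exact_mod_cast (CharP.intCast_eq_intCast R p).2 (Nat.choose_modEq_choose_of_modEq_pow hab hn)

/-- Binomial inversion of `n ↦ d n`: the component of weight `i`. -/
def gmProj (p m : ℕ) (d : ℕ → R → R) (i : ℕ) (x : R) : R :=
  ∑ n ∈ range (p ^ m), ((-1 : ℤ) ^ (n + i) * n.choose i) • d n x

theorem isWeightVector_gmProj (hd : IsTruncHSDeriv p m d) (hiter : IsGmIterativeTrunc p m d)
    (i : ℕ) (x : R) : IsWeightVector p m d i (gmProj p m d i x) := by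
  intro j hj
  set c : ℕ → ℤ := fun n => (-1) ^ (n + i) * n.choose i
  calc d j (gmProj p m d i x)
      = ∑ n ∈ range (p ^ m), ∑ k ∈ Icc (max n j) (min (n + j) (p ^ m - 1)),
          (c n * gmCoeff n j k) • d k x := by
        rw [gmProj, hd.map_sum hj]
        refine sum_congr rfl fun n hn => ?_
        rw [hd.map_zsmul hj, hiter n j (mem_range.1 hn) hj, smul_sum]
        exact sum_congr rfl fun k _ => by rw [← natCast_zsmul, smul_smul]
    _ = ∑ k ∈ Ico j (p ^ m), ∑ n ∈ Icc (k - j) k, (c n * gmCoeff n j k) • d k x :=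
        sum_comm' fun n k => by simp only [mem_range, mem_Icc, mem_Ico]; omega
    _ = ∑ k ∈ Ico j (p ^ m), ((i.choose j : ℤ) * c k) • d k x := by
        refine sum_congr rfl fun k hk => ?_
        rw [← sum_smul, sum_Icc_alternating_choose_mul_gmCoeff (mem_Ico.1 hk).1]
        congr 1
        ring
    _ = ∑ k ∈ range (p ^ m), ((i.choose j : ℤ) * c k) • d k x := by
        refine sum_subset (fun k hk => mem_range.2 (mem_Ico.1 hk).2) fun k hk hkj => ?_
        have hkj : k < j := by simp only [mem_Ico, mem_range] at hk hkj; omega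
        rcases lt_or_ge k i with hki | hik
        · simp [c, Nat.choose_eq_zero_of_lt hki]
        · simp [Nat.choose_eq_zero_of_lt (hik.trans_lt hkj)]
    _ = (i.choose j : R) * gmProj p m d i x := by
        rw [gmProj, mul_sum]
        refine sum_congr rfl fun k _ => ?_
        rw [zsmul_eq_mul, zsmul_eq_mul]
        simp only [c]
        push_cast
        ring

theorem sum_gmProj (hd : IsTruncHSDeriv p m d) (hq : 0 < p ^ m) (x : R) :
    ∑ i ∈ range (p ^ m), gmProj p m d i x = x := by
  have hcoeff : ∀ n ∈ range (p ^ m),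
      ∑ i ∈ range (p ^ m), (-1 : ℤ) ^ (n + i) * n.choose i = if n = 0 then 1 else 0 := by
    intro n hn
    rw [← sum_subset (range_subset_range.2 (mem_range.1 hn)) fun i _ hi => by
      rw [Nat.choose_eq_zero_of_lt (by simpa using hi)]; simp]
    simp only [pow_add, mul_assoc, ← mul_sum, Int.alternating_sum_range_choose]
    split_ifs <;> simp_all
  simp only [gmProj]
  rw [sum_comm]
  simp only [← sum_smul]
  rw [sum_congr rfl fun n hn => by rw [hcoeff n hn]]
  simp [ite_smul, hq, hd.2.1]

end GmDerivation

theorem exists_ne_zero_isWeightVector_one {R : Type*} [CommRing R] [IsDomain R] {p m : ℕ}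
    [Fact p.Prime] [CharP R p] (hm : 0 < m) {d : ℕ → R → R} (hd : IsTruncHSDeriv p m d)
    (hiter : IsGmIterativeTrunc p m d) (hne : d 1 ≠ 0) :
    ∃ u : R, u ≠ 0 ∧ IsWeightVector p m d 1 u := by
  have hq : 1 < p ^ m := Nat.one_lt_pow hm.ne' (Fact.out : p.Prime).one_lt
  obtain ⟨x, hx⟩ := Function.ne_iff.1 hne
  have hdecomp : d 1 x = ∑ i ∈ range (p ^ m), (i : R) * gmProj p m d i x := by
    conv_lhs => rw [← sum_gmProj hd (by omega) x]
    rw [hd.map_sum hq]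
    exact sum_congr rfl fun i _ => by
      rw [isWeightVector_gmProj hd hiter i x 1 hq, Nat.choose_one_right]
  obtain ⟨i, -, hi⟩ := exists_ne_zero_of_sum_ne_zero (hdecomp ▸ hx)
  have hpi : ¬ p ∣ i := fun h => hi (by rw [(CharP.cast_eq_zero_iff R p i).2 h, zero_mul])
  -- an inverse of `i` modulo `p ^ m` turns weight `i` into weight `1`
  obtain ⟨t, -, ht⟩ := Nat.exists_mul_mod_eq_one_of_coprime
    (((Nat.Prime.coprime_iff_not_dvd Fact.out).2 hpi).pow_left m).symm hq
  have hit : i * t ≡ 1 [MOD p ^ m] := by rw [Nat.ModEq, ht, Nat.mod_eq_of_lt hq]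
  exact ⟨gmProj p m d i x ^ t, pow_ne_zero _ (right_ne_zero_of_mul hi),
    ((isWeightVector_gmProj hd hiter i x).pow hd t).of_modEq hit⟩

/-- A `G_m[m]`-derivation on a field of characteristic `p > 0` with `d 1 ≠ 0` admits a
canonical element: an `x` with `d 1 x = x + 1 ≠ 0` and `d n x = 0` for
`2 ≤ n ≤ p ^ m - 1`. -/
theorem gm_trunc_canonical_element (p : ℕ) (hp : p.Prime) (m : ℕ) (hm : 0 < m)
    (K : Type*) [Field K] [CharP K p]
    (d : ℕ → K → K)
    (hd : IsTruncHSDeriv p m d)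
    (hiter : IsGmIterativeTrunc p m d)
    (hne : d 1 ≠ 0) :
    ∃ x : K, d 1 x = x + 1 ∧ x + 1 ≠ 0 ∧
      ∀ n : ℕ, 2 ≤ n → n ≤ p ^ m - 1 → d n x = 0 := by
  have := Fact.mk hp
  obtain ⟨u, hu0, hu⟩ := exists_ne_zero_isWeightVector_one hm hd hiter hne
  have hq : 1 < p ^ m := Nat.one_lt_pow hm.ne' hp.one_lt
  have h1 := hd.isWeightVector_one
  refine ⟨u - 1, ?_, by simpa using hu0, fun n hn2 hn => ?_⟩
  · rw [hd.map_sub hq, hu 1 hq, h1 1 hq]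
    simp
  · have hnq : n < p ^ m := by omega
    rw [hd.map_sub hnq, hu n hnq, h1 n hnq, Nat.choose_eq_zero_of_lt (by omega : 1 < n),
      Nat.choose_eq_zero_of_lt (by omega : 0 < n)]
    simp
end

section
/- Let k be a field of characteristic p > 0, let m > 0, set q = p^m, let f be an m-truncated group law over k, let R be a commutative k-algebra, and let ∂ = (∂_n)_{0 ≤ n < q} be an f-iterative m-truncated HS-derivation on R. Then for all positive integers i, j with i + j < q there exist c_1, …, c_{i+j−1} ∈ k such that for every r ∈ R: ∂_j(∂_i(r)) = binom(i+j, i)·∂_{i+j}(r) + Σ_{s=1}^{i+j−1} c_s·∂_s(r). -/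
open Finset MvPolynomial

/-- `f ∈ k[X,Y]` is an `m`-truncated group law over `k` (for the prime `p`):
all monomials of `f` have both exponents `< p ^ m`, `f(X,0) = X`, `f(0,Y) = Y`, and
`f(f(X,Y),Z) ≡ f(X,f(Y,Z))` modulo the ideal `(X^{p^m}, Y^{p^m}, Z^{p^m})`. -/
def IsTruncGroupLaw (p m : ℕ) {k : Type*} [Field k] (f : MvPolynomial (Fin 2) k) : Prop :=
  (∀ d ∈ f.support, d 0 < p ^ m ∧ d 1 < p ^ m) ∧
  (MvPolynomial.aeval ![(Polynomial.X : Polynomial k), 0] f = Polynomial.X) ∧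
  (MvPolynomial.aeval ![0, (Polynomial.X : Polynomial k)] f = Polynomial.X) ∧
  (MvPolynomial.aeval
      ![MvPolynomial.aeval ![(MvPolynomial.X 0 : MvPolynomial (Fin 3) k), MvPolynomial.X 1] f,
        MvPolynomial.X 2] f -
    MvPolynomial.aeval
      ![(MvPolynomial.X 0 : MvPolynomial (Fin 3) k),
        MvPolynomial.aeval ![(MvPolynomial.X 1 : MvPolynomial (Fin 3) k), MvPolynomial.X 2] f] f
    ∈ Ideal.span {(MvPolynomial.X 0 : MvPolynomial (Fin 3) k) ^ p ^ m,
        MvPolynomial.X 1 ^ p ^ m, MvPolynomial.X 2 ^ p ^ m})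

/-- `D` is an `f`-iterative `m`-truncated HS-derivation (an `f`-derivation):
`D j ∘ D i = Σ_{n < p^m} c_{i,j,n} • D n` where `c_{i,j,n}` is the coefficient of
`X^i Y^j` in `f ^ n`. -/
def IsFIterativeTrunc (p m : ℕ) {k : Type*} [Field k] (f : MvPolynomial (Fin 2) k)
    {R : Type*} [CommRing R] [Algebra k R] (D : ℕ → R → R) : Prop :=
  ∀ i j : ℕ, i < p ^ m → j < p ^ m → ∀ r,
    D j (D i r) = ∑ n ∈ Finset.range (p ^ m),
      MvPolynomial.coeff (Finsupp.single (0 : Fin 2) i + Finsupp.single (1 : Fin 2) j) (f ^ n)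
        • D n r

/-!
Since `f(X,0) = X` and `f(0,Y) = Y`, the polynomial `f` has no constant term and
`f ≡ X + Y` modulo terms of degree `≥ 2`; hence `f ^ n ≡ (X + Y) ^ n` modulo terms of degree
`≥ n + 1`. So the coefficient `c_{i,j,n}` of `X^i Y^j` in `f ^ n` vanishes for `n > i + j`
(and for `n = 0`), and equals `binom(i+j, i)` for `n = i + j`: only `∂_1, …, ∂_{i+j}` survive
in the iterativity rule.
-/

theorem Finset.sum_range_eq_add_sum_Ico_one {M : Type*} [AddCommMonoid M] {g : ℕ → M} {N K : ℕ}
    (hNK : N < K) (h0 : g 0 = 0) (hgt : ∀ n, N < n → g n = 0) :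
    ∑ n ∈ range K, g n = g N + ∑ n ∈ Ico 1 N, g n := calc
  ∑ n ∈ range K, g n = ∑ n ∈ range (N + 1), g n :=
    (sum_subset (range_subset_range.2 hNK) fun n _ hn => hgt n (by simpa using hn)).symm
  _ = g N + ∑ n ∈ range N, g n := by rw [sum_range_succ, add_comm]
  _ = g N + ∑ n ∈ Ico 1 N, g n := by
    refine congrArg _ (sum_subset (fun n hn => ?_) fun n hn hn' => ?_).symm
    · simp only [mem_Ico, mem_range] at hn ⊢
      omega
    · obtain rfl : n = 0 := by
        simp only [mem_Ico, mem_range] at hn hn'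
        omega
      exact h0

namespace MvPolynomial

theorem coeff_single_eq_coeff_aeval_piSingle {σ R : Type*} [CommSemiring R] [DecidableEq σ]
    (f : MvPolynomial σ R) (i : σ) (n : ℕ) :
    coeff (Finsupp.single i n) f = (aeval (Pi.single i Polynomial.X) f).coeff n := by
  induction f using MvPolynomial.induction_on' with
  | add p q hp hq => simp [hp, hq]
  | monomial d c =>
    rw [aeval_monomial, coeff_monomial, Polynomial.algebraMap_eq, Polynomial.coeff_C_mul]
    by_cases hd : d = Finsupp.single i (d i)
    · rw [hd, Finsupp.prod_single_index (by simp)]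
      simp [Polynomial.coeff_X_pow, (Finsupp.single_injective i).eq_iff, eq_comm]
    · obtain ⟨l, hl, hli⟩ : ∃ l, d l ≠ 0 ∧ l ≠ i := by
        by_contra! h
        refine hd (Finsupp.ext fun l => ?_)
        by_cases hli : l = i
        · simp [hli]
        · rw [Finsupp.single_apply, if_neg (Ne.symm hli)]
          by_contra hl
          exact hli (h l hl)
      rw [Finsupp.prod, Finset.prod_eq_zero (Finsupp.mem_support_iff.2 hl) (by simp [hli, hl]),
        if_neg (fun h : d = _ => hd (h ▸ by simp)), Polynomial.coeff_zero, mul_zero]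

end MvPolynomial

namespace MvPowerSeries

variable {σ R : Type*}

theorem le_order_pow_sub_pow [CommRing R] {φ ψ : MvPowerSeries σ R} (hψ : ψ.constantCoeff = 0)
    (hφψ : 2 ≤ (φ - ψ).order) (n : ℕ) : (n + 1 : ℕ∞) ≤ (φ ^ n - ψ ^ n).order := by
  induction n with
  | zero => simp
  | succ n ih =>
    have hφ : 1 ≤ φ.order := by
      have := one_le_order_iff_constCoeff_eq_zero.1 (le_trans (by norm_num) hφψ)
      rw [map_sub, hψ, sub_zero] at this
      exact one_le_order_iff_constCoeff_eq_zero.2 this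
    have hsplit : φ ^ (n + 1) - ψ ^ (n + 1) = φ * (φ ^ n - ψ ^ n) + (φ - ψ) * ψ ^ n := by
      ring
    rw [hsplit]
    refine le_trans (le_min ?_ ?_) min_order_le_add
    · calc ((n + 1 + 1 : ℕ) : ℕ∞) = 1 + (n + 1 : ℕ∞) := by push_cast; ring
        _ ≤ φ.order + (φ ^ n - ψ ^ n).order := add_le_add hφ ih
        _ ≤ _ := le_order_mul
    · calc ((n + 1 + 1 : ℕ) : ℕ∞) = 2 + (n : ℕ∞) := by push_cast; ring
        _ ≤ (φ - ψ).order + (ψ ^ n).order :=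
          add_le_add hφψ (le_order_pow_of_constantCoeff_eq_zero n hψ)
        _ ≤ _ := le_order_mul

theorem coeff_pow_eq_of_degree_le [CommRing R] {φ ψ : MvPowerSeries σ R}
    (hψ : ψ.constantCoeff = 0) (hφψ : 2 ≤ (φ - ψ).order) {d : σ →₀ ℕ} {n : ℕ}
    (hd : d.degree ≤ n) :
    coeff d (φ ^ n) = coeff d (ψ ^ n) := by
  rw [← sub_eq_zero, ← map_sub]
  refine coeff_of_lt_order (lt_of_lt_of_le ?_ (le_order_pow_sub_pow hψ hφψ n))
  exact_mod_cast Nat.lt_succ_of_le hd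

theorem coeff_X_add_X_pow [CommSemiring R] [DecidableEq σ] {a b : σ} (hab : a ≠ b) (i j : ℕ) :
    coeff (Finsupp.single a i + Finsupp.single b j) ((X a + X b : MvPowerSeries σ R) ^ (i + j)) =
      (i + j).choose i := by
  have hterm : ∀ l, (X a ^ l * X b ^ (i + j - l) * ((i + j).choose l : MvPowerSeries σ R)) =
      monomial (Finsupp.single a l + Finsupp.single b (i + j - l)) ((i + j).choose l : R) := by
    intro l
    rw [X_pow_eq, X_pow_eq, ← map_natCast (C (σ := σ) (R := R)), ← monomial_zero_eq_C_apply,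
      monomial_mul_monomial, monomial_mul_monomial, add_zero, one_mul, one_mul]
  have hsingle : ∀ l, Finsupp.single a i + Finsupp.single b j =
      Finsupp.single a l + Finsupp.single b (i + j - l) → l = i := by
    intro l h
    simpa [hab] using (DFunLike.congr_fun h a).symm
  rw [add_pow, map_sum, Finset.sum_eq_single i]
  · rw [hterm, coeff_monomial, if_pos (by rw [Nat.add_sub_cancel_left])]
  · intro l _ hli
    rw [hterm, coeff_monomial, if_neg (fun h => hli (hsingle l h))]
  · intro hi
    exact absurd (Finset.mem_range.2 (by omega)) hi

end MvPowerSeries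

namespace IsTruncGroupLaw

variable {p m : ℕ} {k : Type*} [Field k] {f : MvPolynomial (Fin 2) k}

theorem coeff_single (hf : IsTruncGroupLaw p m f) (i : Fin 2) (n : ℕ) :
    coeff (Finsupp.single i n) f = if n = 1 then 1 else 0 := by
  have hX : aeval (Pi.single i (Polynomial.X : Polynomial k)) f = Polynomial.X := by
    fin_cases i
    · convert hf.2.1 using 3; funext l; fin_cases l <;> rfl
    · convert hf.2.2.1 using 3; funext l; fin_cases l <;> rfl
  rw [coeff_single_eq_coeff_aeval_piSingle, hX, Polynomial.coeff_X]
  simp only [eq_comm]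

theorem two_le_order_sub_X_add_X (hf : IsTruncGroupLaw p m f) :
    2 ≤ ((f : MvPowerSeries (Fin 2) k) - (MvPowerSeries.X 0 + MvPowerSeries.X 1)).order := by
  refine MvPowerSeries.nat_le_order fun d hd => ?_
  have hd' : d 0 + d 1 < 2 := by simpa [Finsupp.degree_eq_sum, Fin.sum_univ_two] using hd
  obtain ⟨i, hi⟩ : ∃ i, d = Finsupp.single i (d i) := by
    by_cases h0 : d 0 = 0
    · exact ⟨1, Finsupp.ext fun l => by fin_cases l <;> simp [h0]⟩
    · exact ⟨0, Finsupp.ext fun l => by fin_cases l <;> simp; omega⟩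
  rw [hi]
  fin_cases i <;> simp [MvPowerSeries.coeff_X, hf.coeff_single, Finsupp.single_eq_single_iff]

theorem coeff_pow_eq_zero_of_degree_lt (hf : IsTruncGroupLaw p m f) {d : Fin 2 →₀ ℕ} {n : ℕ}
    (hd : d.degree < n) : coeff d (f ^ n) = 0 := by
  rw [← coeff_coe, MvPolynomial.coe_pow]
  refine MvPowerSeries.coeff_of_lt_order (lt_of_lt_of_le (by exact_mod_cast hd)
    (MvPowerSeries.le_order_pow_of_constantCoeff_eq_zero n ?_))
  rw [← MvPowerSeries.coeff_zero_eq_constantCoeff_apply, coeff_coe]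
  simpa using hf.coeff_single 0 0

theorem coeff_single_add_single_pow (hf : IsTruncGroupLaw p m f) (i j : ℕ) :
    coeff (Finsupp.single 0 i + Finsupp.single 1 j) (f ^ (i + j)) = (i + j).choose i := by
  rw [← coeff_coe, MvPolynomial.coe_pow, MvPowerSeries.coeff_pow_eq_of_degree_le (by simp)
    hf.two_le_order_sub_X_add_X (by simp), MvPowerSeries.coeff_X_add_X_pow (by decide)]

end IsTruncGroupLaw

theorem f_deriv_approx_additive_general (p : ℕ) (m : ℕ)
    (k : Type*) [Field k]
    (f : MvPolynomial (Fin 2) k) (hf : IsTruncGroupLaw p m f)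
    (R : Type*) [CommRing R] [Algebra k R]
    (d : ℕ → R → R)
    (hiter : IsFIterativeTrunc p m f d)
    (i j : ℕ) (hi : 0 < i) (hij : i + j < p ^ m) :
    ∃ c : ℕ → k, ∀ r : R,
      d j (d i r) = (i + j).choose i • d (i + j) r + ∑ s ∈ Finset.Ico 1 (i + j), c s • d s r := by
  set t : Fin 2 →₀ ℕ := Finsupp.single 0 i + Finsupp.single 1 j
  have ht : t ≠ 0 := fun h => hi.ne' (by simpa [t] using DFunLike.congr_fun h 0)
  refine ⟨fun s => coeff t (f ^ s), fun r => ?_⟩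
  rw [hiter i j (by omega) (by omega), Finset.sum_range_eq_add_sum_Ico_one hij,
    hf.coeff_single_add_single_pow, Nat.cast_smul_eq_nsmul]
  · rw [pow_zero, coeff_one, if_neg ht.symm, zero_smul]
  · intro n hn
    rw [hf.coeff_pow_eq_zero_of_degree_lt (by simpa [t] using hn), zero_smul]

/-- Up to lower order terms, the `f`-iterativity rule looks like the additive one:
`D j ∘ D i = binom(i+j, i) • D (i+j) + (k-linear combination of D 1, …, D (i+j-1))`. -/
theorem f_deriv_approx_additive (p : ℕ) (hp : p.Prime) (m : ℕ) (hm : 0 < m)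
    (k : Type*) [Field k] [CharP k p]
    (f : MvPolynomial (Fin 2) k) (hf : IsTruncGroupLaw p m f)
    (R : Type*) [CommRing R] [Algebra k R]
    (d : ℕ → R → R)
    (hd : IsTruncHSDeriv p m d)
    (hiter : IsFIterativeTrunc p m f d)
    (i j : ℕ) (hi : 0 < i) (hj : 0 < j) (hij : i + j < p ^ m) :
    ∃ c : ℕ → k, ∀ r : R,
      d j (d i r) = (i + j).choose i • d (i + j) r + ∑ s ∈ Finset.Ico 1 (i + j), c s • d s r :=
  f_deriv_approx_additive_general p m k f hf R d hiter i j hi hij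
end

section
/- Let k be a field of characteristic p > 0, let m > 0, set q = p^m, let f be an m-truncated group law over k, let R be a commutative k-algebra, and let ∂ = (∂_n)_{0 ≤ n < q} and ∂' = (∂'_n)_{0 ≤ n < q} be two f-iterative m-truncated HS-derivations on R. If ∂_{p^j} = ∂'_{p^j} for every j < m, then ∂_n = ∂'_n for every n < q. -/
open Finset MvPolynomial

/-!
Since `f ≡ X + Y` modulo `(X, Y)²`, the coefficient of `X^b Y^a` in `f^ℓ` vanishes for
`ℓ > a + b` and is `C(a + b, a)` for `ℓ = a + b`. So `f`-iterativity reads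
`∂_a ∘ ∂_b = C(a + b, a) • ∂_{a+b} + (a combination of the ∂_ℓ, ℓ < a + b)`.
Splitting `n = a + b` with `a = p^v` the exact power of `p` dividing `n`, Lucas' theorem gives
`C(n, a) ≡ n / p^v ≢ 0 (mod p)`, so `∂_n` is determined by the `∂_ℓ` with `ℓ < n`, and strong
induction reduces everything to the indices `p^j`.
-/

namespace MvPolynomial

variable {σ R : Type*} [CommRing R] {f g : MvPolynomial σ R}

theorem coeff_single_eq_coeff_aeval_piSingle_X [DecidableEq σ] (g : MvPolynomial σ R) (i : σ)
    (a : ℕ) : coeff (Finsupp.single i a) g = (aeval (Pi.single i Polynomial.X) g).coeff a := by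
  induction g using MvPolynomial.induction_on' with
  | monomial s r =>
    rw [aeval_monomial, coeff_monomial, Polynomial.algebraMap_eq]
    by_cases hs : ∃ t, s = Finsupp.single i t
    · obtain ⟨t, rfl⟩ := hs
      rw [Finsupp.prod_single_index (by simp), Pi.single_eq_same, Polynomial.coeff_C_mul_X_pow]
      simp [(Finsupp.single_injective i).eq_iff, eq_comm]
    · obtain ⟨j, hj, hsj⟩ : ∃ j, j ≠ i ∧ s j ≠ 0 := by
        by_contra! h
        refine hs ⟨s i, Finsupp.ext fun j => ?_⟩
        by_cases hji : j = i
        · simp [hji]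
        · simp [Ne.symm hji, h j hji]
      have hprod :
          s.prod (fun j e => Pi.single (M := fun _ => Polynomial R) i Polynomial.X j ^ e) = 0 :=
        Finset.prod_eq_zero (Finsupp.mem_support_iff.2 hsj) (by simp [hj, hsj])
      rw [hprod, mul_zero, Polynomial.coeff_zero, if_neg]
      rintro rfl
      simp [Ne.symm hj] at hsj
  | add g h hg hh => simp only [coeff_add, map_add, Polynomial.coeff_add, hg, hh]

theorem sub_sum_X_mem_idealOfVars_sq [Fintype σ] [DecidableEq σ] (h0 : coeff 0 f = 0)
    (h1 : ∀ i, coeff (Finsupp.single i 1) f = 1) :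
    f - ∑ i, X i ∈ idealOfVars σ R ^ 2 := by
  rw [mem_pow_idealOfVars_iff']
  intro x hx
  obtain hx0 | hx1 : x.degree = 0 ∨ x.degree = 1 := by omega
  · rw [Finsupp.degree_eq_zero_iff] at hx0
    simp [hx0, h0, coeff_sum, coeff_X]
  · obtain ⟨i, rfl⟩ : x ∈ Set.range (Finsupp.single · 1) := by
      rw [Finsupp.range_single_one]; exact hx1
    simp [h1, coeff_sum, coeff_X, Finsupp.single_eq_single_iff]

theorem mem_idealOfVars_of_sub_mem_sq (hg : g ∈ idealOfVars σ R)
    (hfg : f - g ∈ idealOfVars σ R ^ 2) : f ∈ idealOfVars σ R := by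
  simpa using Ideal.add_mem _ (Ideal.pow_le_self two_ne_zero hfg) hg

theorem coeff_pow_eq_zero_of_degree_lt (hf : f ∈ idealOfVars σ R) {n : ℕ} {x : σ →₀ ℕ}
    (hx : x.degree < n) : coeff x (f ^ n) = 0 :=
  (mem_pow_idealOfVars_iff' n _).1 (Ideal.pow_mem_pow hf n) x hx

theorem pow_sub_pow_mem_pow_idealOfVars (hg : g ∈ idealOfVars σ R)
    (hfg : f - g ∈ idealOfVars σ R ^ 2) (n : ℕ) :
    f ^ n - g ^ n ∈ idealOfVars σ R ^ (n + 1) := by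
  have hf := mem_idealOfVars_of_sub_mem_sq hg hfg
  induction n with
  | zero => simp
  | succ n ih =>
    have hsplit : f ^ (n + 1) - g ^ (n + 1) = f * (f ^ n - g ^ n) + (f - g) * g ^ n := by ring
    rw [hsplit]
    refine Ideal.add_mem _ ?_ ?_
    · rw [pow_succ' _ (n + 1)]
      exact Ideal.mul_mem_mul hf ih
    · rw [show n + 1 + 1 = 2 + n by omega, pow_add]
      exact Ideal.mul_mem_mul hfg (Ideal.pow_mem_pow hg n)

theorem coeff_pow_eq_of_sub_mem_sq (hg : g ∈ idealOfVars σ R)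
    (hfg : f - g ∈ idealOfVars σ R ^ 2) {n : ℕ} {x : σ →₀ ℕ} (hx : x.degree ≤ n) :
    coeff x (f ^ n) = coeff x (g ^ n) := by
  rw [← sub_eq_zero, ← coeff_sub]
  exact (mem_pow_idealOfVars_iff' _ _).1 (pow_sub_pow_mem_pow_idealOfVars hg hfg n) x
    (Nat.lt_succ_of_le hx)

end MvPolynomial

theorem IsTruncGroupLaw.sub_mem_idealOfVars_sq {p m : ℕ} {k : Type*} [Field k]
    {f : MvPolynomial (Fin 2) k} (hf : IsTruncGroupLaw p m f) :
    f - (X 0 + X 1) ∈ idealOfVars (Fin 2) k ^ 2 := by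
  obtain ⟨-, hX0, h0X, -⟩ := hf
  have hX : ∀ a, coeff (Finsupp.single 0 a) f = Polynomial.X.coeff a := fun a => by
    rw [coeff_single_eq_coeff_aeval_piSingle_X,
      show Pi.single (0 : Fin 2) Polynomial.X = ![Polynomial.X, (0 : Polynomial k)] by
        ext j : 1; fin_cases j <;> rfl, hX0]
  have hY : ∀ a, coeff (Finsupp.single 1 a) f = Polynomial.X.coeff a := fun a => by
    rw [coeff_single_eq_coeff_aeval_piSingle_X,
      show Pi.single (1 : Fin 2) Polynomial.X = ![(0 : Polynomial k), Polynomial.X] by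
        ext j : 1; fin_cases j <;> rfl, h0X]
  rw [← Fin.sum_univ_two]
  exact sub_sum_X_mem_idealOfVars_sq (by simpa using hX 0)
    (Fin.forall_fin_two.2 ⟨by simpa using hX 1, by simpa using hY 1⟩)

theorem Nat.Prime.not_dvd_choose_ordProj {p n : ℕ} (hp : p.Prime) (hn : n ≠ 0) :
    ¬ p ∣ n.choose (ordProj[p] n) := by
  have := Fact.mk hp
  have hmod := Choose.choose_pow_mul_pow_mul_modEq_choose_nat (p := p)
    (k := n.factorization p) (a := ordCompl[p] n) (b := 1)
  rw [Nat.ordProj_mul_ordCompl_eq_self, mul_one, Nat.choose_one_right] at hmod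
  rw [Nat.dvd_iff_mod_eq_zero, hmod]
  exact fun h => Nat.not_dvd_ordCompl hp hn (Nat.dvd_of_mod_eq_zero h)

namespace IsFIterativeTrunc

variable {p m : ℕ} {k : Type*} [Field k] {f : MvPolynomial (Fin 2) k} {R : Type*} [CommRing R]
  [Algebra k R] {D D' : ℕ → R → R}

theorem comp_eq_choose_smul_add_sum (hD : IsFIterativeTrunc p m f D)
    (hf : f - (X 0 + X 1) ∈ idealOfVars (Fin 2) k ^ 2) {a b : ℕ} (hab : a + b < p ^ m) (r : R) :
    D a (D b r) = ((a + b).choose a : k) • D (a + b) r +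
      ∑ ℓ ∈ range (a + b), coeff (Finsupp.single 0 b + Finsupp.single 1 a) (f ^ ℓ) • D ℓ r := by
  set x : Fin 2 →₀ ℕ := Finsupp.single 0 b + Finsupp.single 1 a
  have hx : x.degree = a + b := by simp [x, add_comm]
  have hXY : X 0 + X 1 ∈ idealOfVars (Fin 2) k :=
    Ideal.add_mem _ (Ideal.subset_span ⟨0, rfl⟩) (Ideal.subset_span ⟨1, rfl⟩)
  have hf₁ := mem_idealOfVars_of_sub_mem_sq hXY hf
  have hvanish : ∑ ℓ ∈ Ico (a + b + 1) (p ^ m), coeff x (f ^ ℓ) • D ℓ r = 0 :=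
    sum_eq_zero fun ℓ hℓ => by
      rw [coeff_pow_eq_zero_of_degree_lt hf₁ (by rw [hx]; exact (mem_Ico.1 hℓ).1), zero_smul]
  have htop : coeff x (f ^ (a + b)) = ((a + b).choose a : k) := by
    rw [coeff_pow_eq_of_sub_mem_sq hXY hf hx.le, coeff_add_pow, if_pos (by simp [x, add_comm]),
      Nat.choose_symm_add]
    simp [x]
  rw [hD b a (by omega) (by omega), ← sum_range_add_sum_Ico _ (show a + b + 1 ≤ p ^ m by omega),
    hvanish, add_zero, sum_range_succ, htop, add_comm]

theorem eq_of_forall_lt (hD : IsFIterativeTrunc p m f D) (hD' : IsFIterativeTrunc p m f D')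
    (hf : f - (X 0 + X 1) ∈ idealOfVars (Fin 2) k ^ 2) {a b n : ℕ} (hab : a + b = n)
    (ha : 0 < a) (hb : 0 < b) (hn : n < p ^ m) (hchoose : (n.choose a : k) ≠ 0)
    (hlt : ∀ ℓ < n, D ℓ = D' ℓ) : D n = D' n := by
  subst hab
  funext r
  have hsum : ∑ ℓ ∈ range (a + b), coeff (Finsupp.single 0 b + Finsupp.single 1 a) (f ^ ℓ) • D ℓ r
      = ∑ ℓ ∈ range (a + b), coeff (Finsupp.single 0 b + Finsupp.single 1 a) (f ^ ℓ) • D' ℓ r :=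
    sum_congr rfl fun ℓ hℓ => by rw [hlt ℓ (mem_range.1 hℓ)]
  have h : ((a + b).choose a : k) • D (a + b) r = ((a + b).choose a : k) • D' (a + b) r := by
    rw [← add_left_inj, ← comp_eq_choose_smul_add_sum hD hf hn, hsum,
      ← comp_eq_choose_smul_add_sum hD' hf hn, hlt a (by omega), hlt b (by omega)]
  exact smul_right_injective R hchoose h

end IsFIterativeTrunc

theorem f_deriv_eq_of_eq_on_p_powers_general (p : ℕ) (hp : p.Prime) (m : ℕ)
    (k : Type*) [Field k] [CharP k p]
    (f : MvPolynomial (Fin 2) k) (hf : IsTruncGroupLaw p m f)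
    (R : Type*) [CommRing R] [Algebra k R]
    (d d' : ℕ → R → R)
    (hd : IsTruncHSDeriv p m d) (hd' : IsTruncHSDeriv p m d')
    (hiter : IsFIterativeTrunc p m f d) (hiter' : IsFIterativeTrunc p m f d')
    (heq : ∀ j, j < m → d (p ^ j) = d' (p ^ j)) :
    ∀ n, n < p ^ m → d n = d' n := by
  intro n
  induction n using Nat.strong_induction_on with
  | _ n ih =>
  intro hn
  obtain rfl | hn0 := eq_or_ne n 0
  · funext r
    rw [hd.2.1, hd'.2.1]
  obtain hpow | hpow := eq_or_ne (ordProj[p] n) n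
  · rw [← hpow] at hn ⊢
    exact heq _ ((Nat.pow_lt_pow_iff_right hp.one_lt).1 hn)
  have ha : ordProj[p] n < n := lt_of_le_of_ne (Nat.ordProj_le p hn0) hpow
  refine hiter.eq_of_forall_lt hiter' hf.sub_mem_idealOfVars_sq (Nat.add_sub_cancel' ha.le)
    (Nat.ordProj_pos n p) (by omega) hn ?_ fun ℓ hℓ => ih ℓ hℓ (by omega)
  rw [Ne, CharP.cast_eq_zero_iff k p]
  exact hp.not_dvd_choose_ordProj hn0

/-- Two `f`-derivations agreeing on all `p`-th power indices `p^j`, `j < m`, are equal. -/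
theorem f_deriv_eq_of_eq_on_p_powers (p : ℕ) (hp : p.Prime) (m : ℕ) (hm : 0 < m)
    (k : Type*) [Field k] [CharP k p]
    (f : MvPolynomial (Fin 2) k) (hf : IsTruncGroupLaw p m f)
    (R : Type*) [CommRing R] [Algebra k R]
    (d d' : ℕ → R → R)
    (hd : IsTruncHSDeriv p m d) (hd' : IsTruncHSDeriv p m d')
    (hiter : IsFIterativeTrunc p m f d) (hiter' : IsFIterativeTrunc p m f d')
    (heq : ∀ j, j < m → d (p ^ j) = d' (p ^ j)) :
    ∀ n, n < p ^ m → d n = d' n :=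
  f_deriv_eq_of_eq_on_p_powers_general p hp m k f hf R d d' hd hd' hiter hiter' heq
end

section
/- Let k be a field of characteristic p > 0, let m > 0, set q = p^m, let f be an m-truncated group law over k, let R be a commutative k-algebra, and let ∂ = (∂_n)_{0 ≤ n < q} be an f-iterative m-truncated HS-derivation on R. If r ∈ R satisfies ∂_{p^j}(r) = 0 for every j < m, then ∂_n(r) = 0 for every n with 1 ≤ n < q. -/
open Finset MvPolynomial

/-!
Induct on `n`. If `n` is not a power of `p`, Lucas' theorem provides `0 < i < n` with
`p ∤ C(n, i)`. Expand `∂_{n-i} ∘ ∂_i` by iterativity: the left side vanishes because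
`∂_i r = 0`. On the right, the coefficient of `X^i Y^(n-i)` in `f^l` vanishes for `l > n`
(`f` has no constant term) and is `C(n, i)` for `l = n` (the linear part of `f` is `X + Y`),
while `∂_l r = 0` for `0 < l < n`. Hence `C(n, i) • ∂_n r = 0`.
-/

theorem MvPowerSeries.homogeneousComponent_pow_of_constantCoeff_eq_zero {σ R : Type*}
    [CommSemiring R] {F : MvPowerSeries σ R} (hF : constantCoeff F = 0) (n : ℕ) :
    homogeneousComponent n (F ^ n) = homogeneousComponent 1 F ^ n := by
  induction n with
  | zero =>
    classical
    ext d
    by_cases hd : d = 0 <;>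
      simp [coeff_homogeneousComponent, MvPowerSeries.coeff_one, Finsupp.degree_eq_zero_iff, hd]
  | succ n ih =>
    rw [pow_succ, pow_succ, ← ih, homogeneousComponent_mul_of_le_order
      (le_order_pow_of_constantCoeff_eq_zero n hF) (one_le_order_iff_constCoeff_eq_zero.mpr hF)]

namespace MvPolynomial

theorem coeff_aeval_piSingle_X {σ R : Type*} [CommSemiring R] [DecidableEq σ]
    (f : MvPolynomial σ R) (i : σ) (a : ℕ) :
    (aeval (Pi.single i Polynomial.X) f).coeff a = coeff (Finsupp.single i a) f := by
  induction f using MvPolynomial.induction_on' with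
  | monomial e c =>
    rw [aeval_monomial, coeff_monomial]
    by_cases he : e = Finsupp.single i (e i)
    · rw [he]
      simp [Finsupp.prod_single_index, (Finsupp.single_injective i).eq_iff, eq_comm]
    · obtain ⟨l, hli, hl⟩ : ∃ l ≠ i, e l ≠ 0 := by
        by_contra! h
        exact he (Finsupp.ext fun l => by
          by_cases hl : l = i <;> simp [hl, h])
      rw [Finsupp.prod, Finset.prod_eq_zero (Finsupp.mem_support_iff.mpr hl)
        (by simp [Pi.single_eq_of_ne hli, hl]), mul_zero, Polynomial.coeff_zero, if_neg]
      rintro rfl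
      simp [Ne.symm hli] at hl
  | add f g hf hg => simp [hf, hg]

variable {R : Type*} [CommSemiring R]

theorem constantCoeff_coe {σ : Type*} (f : MvPolynomial σ R) :
    MvPowerSeries.constantCoeff (f : MvPowerSeries σ R) = coeff 0 f := by
  rw [← MvPowerSeries.coeff_zero_eq_constantCoeff_apply, coeff_coe]

theorem coeff_pow_eq_zero_of_degree_lt_s7 {σ : Type*} {f : MvPolynomial σ R} (hf : coeff 0 f = 0)
    {d : σ →₀ ℕ} {n : ℕ} (hd : d.degree < n) : coeff d (f ^ n) = 0 := by
  rw [← coeff_coe, coe_pow]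
  exact MvPowerSeries.coeff_of_lt_order ((Nat.cast_lt.mpr hd).trans_le
    (MvPowerSeries.le_order_pow_of_constantCoeff_eq_zero n (by rw [constantCoeff_coe, hf])))

theorem homogeneousComponent_one_coe_eq_X_add_X {f : MvPolynomial (Fin 2) R}
    (hX : coeff (Finsupp.single 0 1) f = 1) (hY : coeff (Finsupp.single 1 1) f = 1) :
    MvPowerSeries.homogeneousComponent 1 (f : MvPowerSeries (Fin 2) R) =
      ((X 0 + X 1 : MvPolynomial (Fin 2) R) : MvPowerSeries (Fin 2) R) := by
  ext e
  rw [MvPowerSeries.coeff_homogeneousComponent, ← pow_one (X 0 + X 1)]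
  simp only [coeff_coe]
  rw [coeff_add_pow, Finsupp.degree_eq_sum, Fin.sum_univ_two]
  by_cases he : e 0 + e 1 = 1
  · simp only [he, if_true]
    obtain ⟨he0, he1⟩ | ⟨he0, he1⟩ : (e 0 = 1 ∧ e 1 = 0) ∨ (e 0 = 0 ∧ e 1 = 1) := by omega
    · obtain rfl : e = Finsupp.single 0 1 := by ext l; fin_cases l <;> simp [he0, he1]
      simp [hX]
    · obtain rfl : e = Finsupp.single 1 1 := by ext l; fin_cases l <;> simp [he0, he1]
      simp [hY]
  · simp [he]

theorem coeff_pow_eq_choose {f : MvPolynomial (Fin 2) R} (h0 : coeff 0 f = 0)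
    (hX : coeff (Finsupp.single 0 1) f = 1) (hY : coeff (Finsupp.single 1 1) f = 1)
    (i j : ℕ) :
    coeff (Finsupp.single 0 i + Finsupp.single 1 j) (f ^ (i + j)) = (i + j).choose i := by
  set d : Fin 2 →₀ ℕ := Finsupp.single 0 i + Finsupp.single 1 j
  have hd0 : d 0 = i := by simp [d]
  have hd1 : d 1 = j := by simp [d]
  calc coeff d (f ^ (i + j))
      = MvPowerSeries.coeff d (MvPowerSeries.homogeneousComponent (i + j)
          ((f : MvPowerSeries (Fin 2) R) ^ (i + j))) := by
        rw [MvPowerSeries.coeff_homogeneousComponent, Finsupp.degree_eq_sum, Fin.sum_univ_two,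
          hd0, hd1, if_pos rfl, ← coe_pow, coeff_coe]
    _ = ((i + j).choose i : R) := by
        rw [MvPowerSeries.homogeneousComponent_pow_of_constantCoeff_eq_zero
          (by rw [constantCoeff_coe, h0]), homogeneousComponent_one_coe_eq_X_add_X hX hY,
          ← coe_pow, coeff_coe, coeff_add_pow, hd0, hd1, if_pos (by simp)]

end MvPolynomial

namespace IsTruncGroupLaw

variable {p m : ℕ} {k : Type*} [Field k] {f : MvPolynomial (Fin 2) k}

theorem coeff_single_zero (hf : IsTruncGroupLaw p m f) (a : ℕ) :
    coeff (Finsupp.single 0 a) f = (Polynomial.X : Polynomial k).coeff a := by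
  have hsingle : (Pi.single 0 Polynomial.X : Fin 2 → Polynomial k) = ![Polynomial.X, 0] := by
    ext1 l; fin_cases l <;> rfl
  rw [← coeff_aeval_piSingle_X, hsingle, hf.2.1]

theorem coeff_single_one (hf : IsTruncGroupLaw p m f) (a : ℕ) :
    coeff (Finsupp.single 1 a) f = (Polynomial.X : Polynomial k).coeff a := by
  have hsingle : (Pi.single 1 Polynomial.X : Fin 2 → Polynomial k) = ![0, Polynomial.X] := by
    ext1 l; fin_cases l <;> rfl
  rw [← coeff_aeval_piSingle_X, hsingle, hf.2.2.1]

theorem coeff_zero (hf : IsTruncGroupLaw p m f) : coeff 0 f = 0 := by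
  simpa using hf.coeff_single_zero 0

theorem coeff_pow_of_lt (hf : IsTruncGroupLaw p m f) {i j n : ℕ} (h : i + j < n) :
    coeff (Finsupp.single 0 i + Finsupp.single 1 j) (f ^ n) = 0 :=
  coeff_pow_eq_zero_of_degree_lt_s7 hf.coeff_zero (by simpa using h)

theorem coeff_pow_add (hf : IsTruncGroupLaw p m f) (i j : ℕ) :
    coeff (Finsupp.single 0 i + Finsupp.single 1 j) (f ^ (i + j)) = ((i + j).choose i : k) :=
  coeff_pow_eq_choose hf.coeff_zero (by simpa using hf.coeff_single_zero 1)
    (by simpa using hf.coeff_single_one 1) i j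

end IsTruncGroupLaw

theorem IsTruncHSDeriv.map_zero {p m : ℕ} {R : Type*} [CommRing R] {D : ℕ → R → R}
    (hD : IsTruncHSDeriv p m D) {n : ℕ} (hn : n < p ^ m) : D n 0 = 0 := by
  simpa using hD.1 n hn 0 0

theorem IsFIterativeTrunc.choose_smul_eq_zero {p m : ℕ} {k : Type*} [Field k]
    {f : MvPolynomial (Fin 2) k} {R : Type*} [CommRing R] [Algebra k R] {D : ℕ → R → R}
    (hiter : IsFIterativeTrunc p m f D) (hf : IsTruncGroupLaw p m f) (hD : IsTruncHSDeriv p m D)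
    {r : R} {i n : ℕ} (hi : 1 ≤ i) (hin : i < n) (hn : n < p ^ m)
    (hr : ∀ l, 1 ≤ l → l < n → D l r = 0) : (n.choose i : k) • D n r = 0 := by
  obtain ⟨j, rfl⟩ : ∃ j, n = i + j := ⟨n - i, by omega⟩
  have hcomp := hiter i j (by omega) (by omega) r
  rw [hr i hi hin, hD.map_zero (by omega)] at hcomp
  rw [hcomp, Finset.sum_eq_single_of_mem (i + j) (Finset.mem_range.mpr hn), hf.coeff_pow_add]
  intro l _ hl
  rcases Nat.lt_or_gt_of_ne hl with hlt | hgt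
  · rcases Nat.eq_zero_or_pos l with rfl | hl1
    · have hij : (0 : Fin 2 →₀ ℕ) ≠ Finsupp.single 0 i + Finsupp.single 1 j := fun h => by
        have := DFunLike.congr_fun h 0
        simp at this
        omega
      rw [pow_zero, MvPolynomial.coeff_one, if_neg hij, zero_smul]
    · rw [hr l hl1 hlt, smul_zero]
  · rw [hf.coeff_pow_of_lt hgt, zero_smul]

theorem f_deriv_vanish_of_p_powers_vanish_general (p : ℕ) (hp : p.Prime) (m : ℕ)
    (k : Type*) [Field k] [CharP k p]
    (f : MvPolynomial (Fin 2) k) (hf : IsTruncGroupLaw p m f)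
    (R : Type*) [CommRing R] [Algebra k R]
    (d : ℕ → R → R)
    (hd : IsTruncHSDeriv p m d)
    (hiter : IsFIterativeTrunc p m f d)
    (r : R) (hr : ∀ j, j < m → d (p ^ j) r = 0) :
    ∀ n, 1 ≤ n → n < p ^ m → d n r = 0 := by
  have : Fact p.Prime := ⟨hp⟩
  intro n
  induction n using Nat.strong_induction_on with
  | _ n ih =>
  intro hn1 hnq
  by_cases hpow : n = p ^ multiplicity p n
  · rw [hpow] at hnq ⊢
    exact hr _ ((Nat.pow_lt_pow_iff_right hp.one_lt).mp hnq)
  · obtain ⟨i, hi, hchoose⟩ : ∃ i ∈ Finset.Icc 1 (n - 1), ¬ n.choose i ≡ 0 [MOD p] := by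
      by_contra! h
      exact hpow (Choose.eq_pow_multiplicity_of_choose_modEq_zero_nat hn1 h)
    rw [Finset.mem_Icc] at hi
    have hchoose_ne : (n.choose i : k) ≠ 0 := by
      rwa [Ne, CharP.cast_eq_zero_iff k p, ← Nat.modEq_zero_iff_dvd]
    exact (smul_eq_zero.mp (hiter.choose_smul_eq_zero hf hd hi.1 (by omega) hnq
      fun l hl1 hln => ih l hln hl1 (hln.trans hnq))).resolve_left hchoose_ne

/-- If all `p`-th power components `d (p^j)`, `j < m`, of an `f`-derivation vanish at `r`,
then all components `d n`, `1 ≤ n < p^m`, vanish at `r`. -/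
theorem f_deriv_vanish_of_p_powers_vanish (p : ℕ) (hp : p.Prime) (m : ℕ) (hm : 0 < m)
    (k : Type*) [Field k] [CharP k p]
    (f : MvPolynomial (Fin 2) k) (hf : IsTruncGroupLaw p m f)
    (R : Type*) [CommRing R] [Algebra k R]
    (d : ℕ → R → R)
    (hd : IsTruncHSDeriv p m d)
    (hiter : IsFIterativeTrunc p m f d)
    (r : R) (hr : ∀ j, j < m → d (p ^ j) r = 0) :
    ∀ n, 1 ≤ n → n < p ^ m → d n r = 0 :=
  f_deriv_vanish_of_p_powers_vanish_general p hp m k f hf R d hd hiter r hr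
end

section
/- Let K be a field of characteristic p > 0, let ∂ be a nonzero derivation on K, let m ∈ ℕ, and set q = p^m. Then the functions x ↦ (∂^{(0)}(x))^q, x ↦ (∂^{(1)}(x))^q, …, x ↦ (∂^{(p−1)}(x))^q from K to K are linearly independent over K; that is, if c_0, …, c_{p−1} ∈ K satisfy Σ_{i=0}^{p−1} c_i·(∂^{(i)}(x))^q = 0 for all x ∈ K, then c_0 = ⋯ = c_{p−1} = 0. -/
open Finset Function

section Aux

variable {K : Type*} [Field K] {d : K → K}

lemma deriv_zero' (hadd : ∀ x y : K, d (x + y) = d x + d y) : d 0 = 0 := by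
  have := hadd 0 0; simpa using this

lemma deriv_one' (hmul : ∀ x y : K, d (x * y) = x * d y + y * d x) : d 1 = 0 := by
  have := hmul 1 1
  simp only [mul_one, one_mul] at this
  exact left_eq_add.mp this

lemma deriv_natCast' (hadd : ∀ x y : K, d (x + y) = d x + d y)
    (hmul : ∀ x y : K, d (x * y) = x * d y + y * d x) (n : ℕ) : d (n : K) = 0 := by
  induction n with
  | zero => exact_mod_cast deriv_zero' hadd
  | succ n ih =>
    push_cast
    rw [hadd, ih, deriv_one' hmul, add_zero]

lemma deriv_sum' (hadd : ∀ x y : K, d (x + y) = d x + d y) {ι : Type*} (s : Finset ι)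
    (f : ι → K) : d (∑ i ∈ s, f i) = ∑ i ∈ s, d (f i) :=
  map_sum (AddMonoidHom.mk' d fun x y => hadd x y) f s

/-- Iterated Leibniz rule. -/
lemma deriv_iterate_mul (hadd : ∀ x y : K, d (x + y) = d x + d y)
    (hmul : ∀ x y : K, d (x * y) = x * d y + y * d x) (a x : K) (n : ℕ) :
    d^[n] (a * x) = ∑ k ∈ range (n + 1), (n.choose k : K) * (d^[k] a * d^[n - k] x) := by
  induction n with
  | zero => simp
  | succ n ih =>
    rw [iterate_succ_apply', ih, deriv_sum' hadd]
    have hterm : ∀ k, d ((n.choose k : K) * (d^[k] a * d^[n - k] x)) =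
        (n.choose k : K) * (d^[k + 1] a * d^[n - k] x)
          + (n.choose k : K) * (d^[k] a * d^[(n - k) + 1] x) := by
      intro k
      rw [hmul, deriv_natCast' hadd hmul, hmul, iterate_succ_apply', iterate_succ_apply']
      ring
    rw [Finset.sum_congr rfl fun k _ => hterm k, Finset.sum_add_distrib]
    rw [Finset.sum_range_succ' (fun k => ((n + 1).choose k : K) *
      (d^[k] a * d^[n + 1 - k] x)) (n + 1)]
    simp only [Nat.succ_sub_succ]
    have h1 : ∑ k ∈ range (n + 1), ((n + 1).choose (k + 1) : K) *
        (d^[k + 1] a * d^[n - k] x)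
        = ∑ k ∈ range (n + 1), ((n.choose k : K) * (d^[k + 1] a * d^[n - k] x)
          + (n.choose (k + 1) : K) * (d^[k + 1] a * d^[n - k] x)) := by
      refine Finset.sum_congr rfl fun k hk => ?_
      rw [Nat.choose_succ_succ, Nat.cast_add, add_mul]
    rw [h1, Finset.sum_add_distrib]
    have h2 : ∑ k ∈ range (n + 1), ((n.choose k : K) * (d^[k] a * d^[(n - k) + 1] x))
        = (∑ k ∈ range (n + 1), (n.choose (k + 1) : K) * (d^[k + 1] a * d^[n - k] x))
          + ((n + 1).choose 0 : K) * (d^[0] a * d^[n + 1 - 0] x) := by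
      rw [Finset.sum_range_succ' (fun k => (n.choose k : K) * (d^[k] a * d^[(n - k) + 1] x)) n]
      rw [Finset.sum_range_succ (fun k => (n.choose (k + 1) : K) * (d^[k + 1] a * d^[n - k] x)) n]
      simp only [Nat.choose_succ_self, Nat.cast_zero, zero_mul, add_zero,
        Nat.choose_zero_right, Nat.cast_one, one_mul, iterate_zero, id_eq,
        Nat.sub_zero, Nat.sub_self]
      refine congrArg₂ (· + ·) (Finset.sum_congr rfl fun k hk => ?_) rfl
      have hk' : k < n := Finset.mem_range.mp hk
      rw [show n - (k + 1) + 1 = n - k from by omega]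
    rw [h2]
    ring

/-- Triangle sum reindexing. -/
lemma tri_sum {M : Type*} [AddCommMonoid M] (N : ℕ) (f : ℕ → ℕ → M) :
    ∑ i ∈ range N, ∑ k ∈ range i, f i k
      = ∑ j ∈ range N, ∑ k ∈ range (N - 1 - j), f (j + k + 1) k := by
  induction N with
  | zero => simp
  | succ N ih =>
    rw [Finset.sum_range_succ, ih,
      Finset.sum_range_succ (fun j => ∑ k ∈ range (N + 1 - 1 - j), f (j + k + 1) k) N]
    have hz : ∑ k ∈ range (N + 1 - 1 - N), f (N + k + 1) k = 0 := by
      rw [show N + 1 - 1 - N = 0 from by omega]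
      simp
    rw [hz, add_zero]
    have hstep : ∀ j ∈ range N, ∑ k ∈ range (N + 1 - 1 - j), f (j + k + 1) k
        = ∑ k ∈ range (N - 1 - j), f (j + k + 1) k + f N (N - 1 - j) := by
      intro j hj
      have hj' : j < N := Finset.mem_range.mp hj
      rw [show N + 1 - 1 - j = (N - 1 - j) + 1 from by omega, Finset.sum_range_succ]
      congr 2
      omega
    rw [Finset.sum_congr rfl hstep, Finset.sum_add_distrib]
    congr 1
    rw [Finset.sum_range_reflect (fun k => f N k) N]

end Aux

/-- For a nonzero derivation `d` on a field `K` of characteristic `p` and `q = p ^ m`,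
the maps `x ↦ (d^{(i)} x) ^ q`, `i = 0, …, p - 1`, are linearly independent over `K`. -/
theorem iterates_pow_q_linearIndependent (p : ℕ) (hp : p.Prime) (m : ℕ)
    (K : Type*) [Field K] [CharP K p]
    (d : K → K)
    (hadd : ∀ x y : K, d (x + y) = d x + d y)
    (hmul : ∀ x y : K, d (x * y) = x * d y + y * d x)
    (hne : d ≠ 0)
    (c : ℕ → K)
    (hc : ∀ x : K, ∑ i ∈ Finset.range p, c i * (d^[i] x) ^ p ^ m = 0) :
    ∀ i, i < p → c i = 0 := by
  haveI := Fact.mk hp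
  have natq : ∀ n : ℕ, ((n : K)) ^ p ^ m = (n : K) := by
    intro n
    rw [← iterateFrobenius_def, map_natCast]
  obtain ⟨a, ha⟩ : ∃ a : K, d a ≠ 0 := by
    by_contra h
    push_neg at h
    exact hne (funext fun x => h x)
  have key : ∀ n : ℕ, n < p → ∀ c : ℕ → K,
      (∀ x : K, ∑ i ∈ Finset.range (n + 1), c i * (d^[i] x) ^ p ^ m = 0) →
      ∀ i, i ≤ n → c i = 0 := by
    intro n
    induction n with
    | zero =>
      intro _ c hcc i hi
      interval_cases i
      have := hcc 1
      simpa using this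
    | succ n ih =>
      intro hn c hcc i hi
      have expand : ∀ (x : K) (i : ℕ), (d^[i] (a * x)) ^ p ^ m
          = ∑ k ∈ range (i + 1),
            (i.choose k : K) * ((d^[k] a) ^ p ^ m * (d^[i - k] x) ^ p ^ m) := by
        intro x i
        rw [deriv_iterate_mul hadd hmul, sum_pow_char_pow]
        refine Finset.sum_congr rfl fun k _ => ?_
        rw [mul_pow, mul_pow, natq]
      set c' : ℕ → K := fun j => ∑ k ∈ range (n + 1 - j),
        ((j + k + 1).choose (k + 1) : K) * ((d^[k + 1] a) ^ p ^ m * c (j + k + 1)) with hc'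
      have hcc' : ∀ x : K, ∑ j ∈ Finset.range (n + 1), c' j * (d^[j] x) ^ p ^ m = 0 := by
        intro x
        have E := hcc (a * x)
        simp only [expand, Finset.mul_sum] at E
        have hsplit : ∀ i : ℕ, ∑ k ∈ range (i + 1),
            c i * ((i.choose k : K) * ((d^[k] a) ^ p ^ m * (d^[i - k] x) ^ p ^ m))
            = (∑ k ∈ range i, c i * ((i.choose (k + 1) : K) *
                ((d^[k + 1] a) ^ p ^ m * (d^[i - (k + 1)] x) ^ p ^ m)))
              + a ^ p ^ m * (c i * (d^[i] x) ^ p ^ m) := by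
          intro i
          rw [Finset.sum_range_succ' (fun k => c i * ((i.choose k : K) *
            ((d^[k] a) ^ p ^ m * (d^[i - k] x) ^ p ^ m)))]
          simp only [Nat.choose_zero_right, Nat.cast_one, one_mul, iterate_zero, id_eq,
            Nat.sub_zero]
          congr 1
          ring
        rw [Finset.sum_congr rfl fun i _ => hsplit i, Finset.sum_add_distrib,
          ← Finset.mul_sum, hcc x, mul_zero, add_zero] at E
        rw [tri_sum (n + 2) (fun i k => c i * ((i.choose (k + 1) : K) *
          ((d^[k + 1] a) ^ p ^ m * (d^[i - (k + 1)] x) ^ p ^ m)))] at E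
        have hsimp : ∀ j ∈ range (n + 2), ∑ k ∈ range (n + 2 - 1 - j),
            c (j + k + 1) * (((j + k + 1).choose (k + 1) : K) *
              ((d^[k + 1] a) ^ p ^ m * (d^[(j + k + 1) - (k + 1)] x) ^ p ^ m))
            = c' j * (d^[j] x) ^ p ^ m := by
          intro j _
          rw [hc']
          simp only
          rw [Finset.sum_mul]
          rw [show n + 2 - 1 - j = n + 1 - j from by omega]
          refine Finset.sum_congr rfl fun k _ => ?_
          rw [show j + k + 1 - (k + 1) = j from by omega]
          ring
        rw [Finset.sum_congr rfl hsimp, Finset.sum_range_succ] at E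
        have hlast : c' (n + 1) = 0 := by
          rw [hc']
          simp
        rw [hlast, zero_mul, add_zero] at E
        exact E
      have hcz : ∀ i, i ≤ n → c' i = 0 := ih (lt_trans (Nat.lt_succ_self n) hn) c' hcc'
      have hcn1 : c (n + 1) = 0 := by
        have h0 := hcz n le_rfl
        rw [hc'] at h0
        simp only at h0
        rw [show n + 1 - n = 1 from by omega] at h0
        simp only [Finset.sum_range_one] at h0
        rw [show n + 0 + 1 = n + 1 from by omega] at h0
        have hch : ((n + 1).choose (0 + 1) : K) = ((n + 1 : ℕ) : K) := by
          norm_num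
        rw [hch] at h0
        have hne1 : ((n + 1 : ℕ) : K) ≠ 0 := by
          rw [Ne, CharP.cast_eq_zero_iff K p]
          intro hdvd
          have := Nat.le_of_dvd (Nat.succ_pos n) hdvd
          omega
        have hne2 : (d^[0 + 1] a) ^ p ^ m ≠ 0 := by
          simp only [zero_add, iterate_one]
          exact pow_ne_zero _ ha
        rcases mul_eq_zero.mp h0 with h0' | h0'
        · exact absurd h0' hne1
        · rcases mul_eq_zero.mp h0' with h0'' | h0''
          · exact absurd h0'' hne2
          · exact h0''
      rcases Nat.lt_succ_iff_lt_or_eq.mp (Nat.lt_succ_of_le hi) with h | h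
      · have hcc2 : ∀ x : K, ∑ i ∈ Finset.range (n + 1), c i * (d^[i] x) ^ p ^ m = 0 := by
          intro x
          have := hcc x
          rw [Finset.sum_range_succ, hcn1, zero_mul, add_zero] at this
          exact this
        exact ih (lt_trans (Nat.lt_succ_self n) hn) c hcc2 i (Nat.lt_succ_iff.mp h)
      · rw [h]; exact hcn1
  intro i hip
  have hp1 : p - 1 < p := Nat.sub_lt hp.pos one_pos
  have hrange : ∀ x : K, ∑ j ∈ Finset.range (p - 1 + 1), c j * (d^[j] x) ^ p ^ m = 0 := by
    intro x
    rw [Nat.sub_add_cancel hp.pos]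
    exact hc x
  exact key (p - 1) hp1 c hrange i (by omega)
end

section
/- Let K be a field of characteristic p > 0 and let ∂ be a nonzero derivation on K such that ∂^{(p)} = ∂. Then there exists a nonzero x ∈ K with ∂(x) = x. -/
open Polynomial

/-! Over `𝔽_p` the derivation `∂` is linear and, as `∂^p = ∂`, killed by `X^p - X = ∏_c (X - c)`.
Since `∂ ≠ 0`, this gives an eigenvector `y` with nonzero eigenvalue `c ∈ 𝔽_p`. By the Leibniz rule
`∂(y^n) = n c y^n`, so `n ≡ c⁻¹ (mod p)` gives `∂(y^n) = y^n`. -/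

theorem FiniteField.prod_univ_X_sub_C (F : Type*) [Field F] [Fintype F] :
    ∏ c : F, (X - C c) = (X ^ Fintype.card F - X : F[X]) := by
  have hq : 1 < Fintype.card F := Fintype.one_lt_card
  have hmonic : (X ^ Fintype.card F - X : F[X]).Monic :=
    monic_X_pow_sub (degree_X_le.trans_lt (by exact_mod_cast hq))
  have hroots := FiniteField.roots_X_pow_card_sub_X F
  have hdeg := FiniteField.X_pow_card_sub_X_natDegree_eq F hq
  have h := prod_multiset_X_sub_C_of_monic_of_roots_card_eq hmonic
    (by rw [hroots, hdeg]; rfl)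
  rw [hroots] at h
  exact h

namespace Module.End

variable {R M : Type*} [CommRing R] [AddCommGroup M] [Module R M]

theorem exists_hasEigenvalue_of_aeval_prod_X_sub_C_apply_eq_zero (f : End R M) (s : Finset R)
    {v : M} (hv : v ≠ 0) (h : aeval f (∏ c ∈ s, (X - C c)) v = 0) :
    ∃ c ∈ s, f.HasEigenvalue c := by
  classical
  induction s using Finset.induction_on with
  | empty => exact absurd (by simpa using h) hv
  | insert a s has ih =>
    rw [Finset.prod_insert has, map_mul, mul_apply] at h
    by_cases hw : aeval f (∏ c ∈ s, (X - C c)) v = 0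
    · obtain ⟨c, hc, hfc⟩ := ih hw
      exact ⟨c, Finset.mem_insert_of_mem hc, hfc⟩
    · refine ⟨a, Finset.mem_insert_self a s, hasEigenvalue_of_hasEigenvector ⟨?_, hw⟩⟩
      rwa [map_sub, aeval_X, aeval_C, LinearMap.sub_apply, algebraMap_end_apply, sub_eq_zero,
        ← mem_genEigenspace_one] at h

theorem exists_hasEigenvalue_ne_zero_of_pow_card_eq_self {F V : Type*} [Field F] [Fintype F]
    [AddCommGroup V] [Module F V] (f : End F V) (hf : f ^ Fintype.card F = f) (hf0 : f ≠ 0) :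
    ∃ c ≠ 0, f.HasEigenvalue c := by
  classical
  obtain ⟨v, hv⟩ : ∃ v, f v ≠ 0 := by
    by_contra! h
    exact hf0 (LinearMap.ext h)
  have hkill : aeval f (∏ c ∈ Finset.univ.erase (0 : F), (X - C c)) (f v) = 0 := by
    have h : aeval f (∏ c : F, (X - C c)) = 0 := by
      rw [FiniteField.prod_univ_X_sub_C, map_sub, map_pow, aeval_X, hf, sub_self]
    rw [← Finset.prod_erase_mul _ _ (Finset.mem_univ 0), map_mul] at h
    simpa using congrArg (· v) h
  obtain ⟨c, hc, hfc⟩ := f.exists_hasEigenvalue_of_aeval_prod_X_sub_C_apply_eq_zero _ hv hkill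
  exact ⟨c, Finset.ne_of_mem_erase hc, hfc⟩

end Module.End

namespace Derivation

def ofLeibniz {A : Type*} [CommRing A] (n : ℕ) [Algebra (ZMod n) A] (d : A →+ A)
    (h : ∀ a b, d (a * b) = a * d b + b * d a) : Derivation (ZMod n) A A :=
  Derivation.mk' (d.toZModLinearMap n) h

theorem apply_pow_of_apply_eq_smul {R A : Type*} [CommSemiring R] [CommSemiring A] [Algebra R A]
    (D : Derivation R A A) {c : R} {y : A} (hy : D y = c • y) (n : ℕ) :
    D (y ^ n) = (n * c) • y ^ n := by
  induction n with
  | zero => simp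
  | succ n ih =>
    rw [pow_succ, leibniz, ih, hy]
    simp only [smul_eq_mul, Algebra.smul_def, map_mul, map_add, Nat.cast_succ, map_one]
    ring

end Derivation

/-- For a nonzero derivation `d` on a field `K` of characteristic `p` with `d^{(p)} = d`,
there is a nonzero `x` with `d x = x`. -/
theorem exists_dx_eq_x (p : ℕ) (hp : p.Prime)
    (K : Type*) [Field K] [CharP K p]
    (d : K → K)
    (hadd : ∀ x y : K, d (x + y) = d x + d y)
    (hmul : ∀ x y : K, d (x * y) = x * d y + y * d x)
    (hne : d ≠ 0)
    (hdp : d^[p] = d) :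
    ∃ x : K, x ≠ 0 ∧ d x = x := by
  have : Fact p.Prime := ⟨hp⟩
  let _ : Algebra (ZMod p) K := ZMod.algebra K p
  let D := Derivation.ofLeibniz p (AddMonoidHom.mk' d hadd) hmul
  have hD : ⇑D = d := rfl
  have hDp : (D : Module.End (ZMod p) K) ^ Fintype.card (ZMod p) = D := by
    rw [ZMod.card]
    exact LinearMap.coe_injective (by rw [Module.End.coe_pow]; exact hdp)
  have hD0 : (D : Module.End (ZMod p) K) ≠ 0 := fun h => hne (congrArg DFunLike.coe h)
  obtain ⟨c, hc0, hc⟩ := Module.End.exists_hasEigenvalue_ne_zero_of_pow_card_eq_self _ hDp hD0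
  obtain ⟨y, hy⟩ := hc.exists_hasEigenvector
  refine ⟨y ^ (c⁻¹).val, pow_ne_zero _ hy.2, ?_⟩
  rw [← hD, D.apply_pow_of_apply_eq_smul hy.apply_eq_smul, ZMod.natCast_zmod_val,
    inv_mul_cancel₀ hc0, one_smul]
end

section
/- Let K be a field of characteristic p > 0 and let ∂ be a nonzero derivation on K such that ∂^{(p)} = 0. Then the image of ∂ equals the kernel of ∂^{(p−1)}; that is, {∂(x) : x ∈ K} = {y ∈ K : ∂^{(p−1)}(y) = 0}. -/
open Function

/-- For a nonzero derivation `d` on a field `K` of characteristic `p` with `d^{(p)} = 0`,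
the image of `d` equals the kernel of `d^{(p-1)}`. -/
theorem image_eq_kernel (p : ℕ) (hp : p.Prime)
    (K : Type*) [Field K] [CharP K p]
    (d : K → K)
    (hadd : ∀ x y : K, d (x + y) = d x + d y)
    (hmul : ∀ x y : K, d (x * y) = x * d y + y * d x)
    (hne : d ≠ 0)
    (hdp : d^[p] = 0) :
    Set.range d = {y : K | d^[p - 1] y = 0} := by
  classical
  have hp2 : 2 ≤ p := hp.two_le
  -- basic derivation facts
  have d0 : d 0 = 0 := by
    have h := hadd 0 0
    simp only [add_zero] at h
    rwa [left_eq_add] at h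
  have d1 : d 1 = 0 := by
    have h := hmul 1 1
    simp only [one_mul, mul_one] at h
    rwa [left_eq_add] at h
  set D : K →+ K := AddMonoidHom.mk' d hadd with hD
  have hDd : ∀ x, D x = d x := fun _ => rfl
  have dneg : ∀ x : K, d (-x) = - d x := fun x => map_neg D x
  have dinv : ∀ c : K, d c = 0 → d c⁻¹ = 0 := by
    intro c hc
    rcases eq_or_ne c 0 with rfl | hc0
    · simpa using d0
    · have h := hmul c c⁻¹
      rw [mul_inv_cancel₀ hc0, d1, hc, mul_zero, add_zero] at h
      exact (mul_eq_zero.mp h.symm).resolve_left hc0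
  have dnat : ∀ n : ℕ, d (n : K) = 0 := by
    intro n
    induction n with
    | zero => simpa using d0
    | succ n ih => push_cast; rw [hadd, ih, d1, add_zero]
  have dm1pow : ∀ j : ℕ, d ((-1 : K)^j) = 0 := by
    intro j
    induction j with
    | zero => simpa using d1
    | succ j ih =>
      rw [pow_succ, hmul, ih, dneg, d1, neg_zero, mul_zero, mul_zero, add_zero]
  -- find maximal e with d^[e] ≠ 0
  have hex : ∃ n, d^[n+1] = 0 := ⟨p - 1, by rwa [Nat.sub_add_cancel (by omega)]⟩
  set e := Nat.find hex with hedef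
  have he1 : d^[e+1] = 0 := Nat.find_spec hex
  have hepos : 1 ≤ e := by
    by_contra h
    push_neg at h
    interval_cases e
    · exact hne (by simpa using he1)
  have hee : d^[e] ≠ 0 := by
    have h := Nat.find_min hex (m := e - 1) (by omega)
    rwa [Nat.sub_add_cancel hepos] at h
  obtain ⟨a, ha⟩ : ∃ a, d^[e] a ≠ 0 := by
    by_contra h
    push_neg at h
    exact hee (funext h)
  set b := d^[e] a with hb
  set t := d^[e-1] a / b with ht
  have hdb : d b = 0 := by
    have h1 : d (d^[e] a) = d^[e+1] a := (Function.iterate_succ_apply' d e a).symm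
    rw [hb, h1, he1]
    rfl
  have hdt : d t = 1 := by
    have htb : t * b = d^[e-1] a := div_mul_cancel₀ _ ha
    have h1 : d (t * b) = t * d b + b * d t := hmul t b
    have h2 : d (d^[e-1] a) = b := by
      rw [← Function.iterate_succ_apply' d (e-1) a, hb]
      congr 2
      omega
    rw [htb, h2, hdb, mul_zero, zero_add] at h1
    have h3 : b * 1 = b * d t := by rw [mul_one]; exact h1
    exact (mul_left_cancel₀ ha h3).symm
  -- power rule
  have dpow : ∀ n : ℕ, d (t^(n+1)) = (n+1 : K) * t^n := by
    intro n
    induction n with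
    | zero => simpa using hdt
    | succ n ih =>
      have h : t^(n+2) = t * t^(n+1) := by ring
      rw [h, hmul, ih, hdt]
      push_cast
      ring
  -- factorials nonzero
  have hfac : ∀ j : ℕ, j < p → (j.factorial : K) ≠ 0 := by
    intro j hj
    rw [Ne, CharP.cast_eq_zero_iff K p]
    intro h
    have := (Nat.Prime.dvd_factorial hp).mp h
    omega
  ext y
  constructor
  · rintro ⟨x, rfl⟩
    show d^[p-1] (d x) = 0
    have h : d^[p-1] (d x) = d^[p] x := by
      rw [← Function.iterate_succ_apply]
      congr 1
      omega
    rw [h, hdp]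
    rfl
  · intro hy
    have hy : d^[p-1] y = 0 := hy
    -- antiderivative
    set F : ℕ → K := fun j => (-1 : K)^j * ((j.factorial : K))⁻¹ * t^j * d^[j] y with hF
    set x : K := ∑ j ∈ Finset.range (p-1),
        (-1 : K)^j * (((j+1).factorial : K))⁻¹ * (t^(j+1) * d^[j] y) with hx
    refine ⟨x, ?_⟩
    have dconst : ∀ j : ℕ, d ((-1 : K)^j * (((j+1).factorial : K))⁻¹) = 0 := by
      intro j
      rw [hmul, dm1pow, dinv _ (dnat _), mul_zero, mul_zero, add_zero]
    have key : ∀ j ∈ Finset.range (p-1),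
        d ((-1 : K)^j * (((j+1).factorial : K))⁻¹ * (t^(j+1) * d^[j] y))
          = F j - F (j+1) := by
      intro j hj
      rw [Finset.mem_range] at hj
      have hj1 : j + 1 < p := by omega
      have hjp : j < p := by omega
      have hf1 : ((j+1).factorial : K) ≠ 0 := hfac _ hj1
      have hf0 : (j.factorial : K) ≠ 0 := hfac _ hjp
      rw [hmul]
      rw [dconst, mul_zero, add_zero]
      rw [hmul, dpow]
      rw [← Function.iterate_succ_apply' d j y]
      have hfs : ((j+1).factorial : K) = ((j : K) + 1) * (j.factorial : K) := by
        rw [Nat.factorial_succ]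
        push_cast
        ring
      simp only [hF]
      rw [hfs]
      have hj1K : ((j : K) + 1) ≠ 0 := by
        have : (((j+1) : ℕ) : K) ≠ 0 := by
          rw [Ne, CharP.cast_eq_zero_iff K p]
          intro h
          have := Nat.le_of_dvd (by omega) h
          omega
        push_cast at this
        exact this
      field_simp
      ring
    have dx : d x = ∑ j ∈ Finset.range (p-1), (F j - F (j+1)) := by
      rw [hx, ← hDd, map_sum]
      exact Finset.sum_congr rfl (fun j hj => key j hj)
    rw [dx, Finset.sum_range_sub' F]
    have hF0 : F 0 = y := by simp [hF]
    have hFp : F (p-1) = 0 := by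
      simp only [hF, hy, mul_zero]
    rw [hF0, hFp, sub_zero]
end

section
/- Let p be a prime, let R be a commutative ring of characteristic p, and let ∂ = (∂_n)_{n ∈ ℕ} be an HS-derivation on R whose components commute pairwise (∂_i ∘ ∂_j = ∂_j ∘ ∂_i for all i, j). Then for every n ∈ ℕ and every r ∈ R, the sum Σ_{(i_1,…,i_p) ∈ ℕ^p, i_1+⋯+i_p = n} (∂_{i_1} ∘ ∂_{i_2} ∘ ⋯ ∘ ∂_{i_p})(r) equals ∂_{n/p}^{(p)}(r) if p divides n, and equals 0 otherwise. -/
/-!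
The cyclic group of order `p` acts on `p`-tuples by rotation. Since the `D i` commute, the
summand `D i₁ ∘ ⋯ ∘ D i_p` only depends on the multiset of indices, so it is constant on
rotation orbits. For prime `p` a non-constant tuple has an orbit of size `p`, which contributes
`p • x = 0` in characteristic `p`. What is left is the sum over constant tuples, and the only
constant tuple with sum `n` is `(n / p, …, n / p)`, which exists if and only if `p ∣ n`.
-/

open Finset Function

/-- `D` is a Hasse-Schmidt derivation on `R`. -/
def IsHSDeriv {R : Type*} [CommRing R] (D : ℕ → R → R) : Prop :=
  (∀ n x y, D n (x + y) = D n x + D n y) ∧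
  (∀ x, D 0 x = x) ∧
  (∀ n x y, D n (x * y) = ∑ ij ∈ Finset.HasAntidiagonal.antidiagonal n, D ij.1 x * D ij.2 y)

/-- The composition `D i₁ ∘ D i₂ ∘ ⋯ ∘ D iₖ` for a list of indices `[i₁, …, iₖ]`. -/
def compList {R : Type*} (D : ℕ → R → R) : List ℕ → R → R
  | [] => id
  | n :: ns => D n ∘ compList D ns

open MulAction

namespace IsPGroup

variable {p : ℕ} [Fact p.Prime] {G α R : Type*} [Group G] [MulAction G α]
  [NonAssocSemiring R] [CharP R p]

theorem sum_orbit_eq_zero (hG : IsPGroup p G) {f : α → R} (hf : ∀ (g : G) a, f (g • a) = f a)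
    {a : α} (ha : a ∉ fixedPoints G α) {t : Finset α} (ht : ↑t = orbit G a) :
    ∑ b ∈ t, f b = 0 := by
  have hconst : ∀ b ∈ t, f b = f a := by
    intro b hb
    obtain ⟨g, rfl⟩ : b ∈ orbit G a := ht ▸ hb
    exact hf g a
  have : Fintype (orbit G a) := ht ▸ inferInstance
  have hcard : #t = Fintype.card (orbit G a) := by
    rw [Fintype.card_eq_nat_card, ← ht, Nat.card_coe_set_eq, Set.ncard_coe_finset]
  obtain ⟨k, hk⟩ := hG.card_orbit a
  rw [← Fintype.card_eq_nat_card, ← hcard] at hk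
  have hk0 : k ≠ 0 := by
    rintro rfl
    exact ha (mem_fixedPoints_iff_card_orbit_eq_one.2 (by rw [← hcard, hk, pow_zero]))
  have hdvd : p ∣ #t := hk ▸ dvd_pow_self p hk0
  rw [sum_congr rfl hconst, sum_const, nsmul_eq_mul, (CharP.cast_eq_zero_iff R p _).2 hdvd,
    zero_mul]

theorem sum_filter_notMem_fixedPoints_eq_zero (hG : IsPGroup p G)
    [DecidablePred (· ∈ fixedPoints G α)] {s : Finset α} (hs : ∀ (g : G), ∀ a ∈ s, g • a ∈ s)
    {f : α → R} (hf : ∀ (g : G) a, f (g • a) = f a) :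
    ∑ a ∈ s with a ∉ fixedPoints G α, f a = 0 := by
  classical
  rw [← sum_fiberwise_of_maps_to (fun a ha => mem_image_of_mem (orbit G ·) ha)]
  refine sum_eq_zero fun O hO => ?_
  obtain ⟨a, ha, rfl⟩ := mem_image.1 hO
  refine hG.sum_orbit_eq_zero hf (mem_filter.1 ha).2 ?_
  ext b
  simp only [coe_filter, Set.mem_ofPred_eq, mem_filter]
  constructor
  · rintro ⟨-, hb⟩
    exact orbit_eq_iff.1 hb
  · intro hb
    refine ⟨⟨?_, ?_⟩, orbit_eq_iff.2 hb⟩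
    · obtain ⟨g, rfl⟩ := hb
      exact hs g a (mem_filter.1 ha).1
    · rw [subsingleton_orbit_iff_mem_fixedPoints.symm, orbit_eq_iff.2 hb,
        subsingleton_orbit_iff_mem_fixedPoints]
      exact (mem_filter.1 ha).2

theorem sum_eq_sum_filter_mem_fixedPoints (hG : IsPGroup p G)
    [DecidablePred (· ∈ fixedPoints G α)] {s : Finset α} (hs : ∀ (g : G), ∀ a ∈ s, g • a ∈ s)
    {f : α → R} (hf : ∀ (g : G) a, f (g • a) = f a) :
    ∑ a ∈ s, f a = ∑ a ∈ s with a ∈ fixedPoints G α, f a := by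
  rw [← sum_filter_add_sum_filter_not s (· ∈ fixedPoints G α),
    hG.sum_filter_notMem_fixedPoints_eq_zero hs hf, add_zero]

end IsPGroup

section compList

variable {R : Type*} (D : ℕ → R → R)

theorem compList_perm (hcomm : ∀ i j, D i ∘ D j = D j ∘ D i) {l₁ l₂ : List ℕ}
    (h : l₁.Perm l₂) : compList D l₁ = compList D l₂ := by
  induction h with
  | nil => rfl
  | cons x _ ih => simp only [compList, ih]
  | swap x y l =>
    change D y ∘ (D x ∘ compList D l) = D x ∘ (D y ∘ compList D l)
    rw [← comp_assoc, hcomm, comp_assoc]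
  | trans _ _ ih₁ ih₂ => rw [ih₁, ih₂]

theorem compList_replicate (k c : ℕ) : compList D (List.replicate k c) = (D c)^[k] := by
  induction k with
  | zero => rfl
  | succ k ih => rw [List.replicate_succ, compList, ih, iterate_succ']

end compList

-- Only a local instance: globally it would compete with the pointwise action `Pi.mulAction`.
abbrev Fin.rotateAction (p : ℕ) [NeZero p] (α : Type*) :
    MulAction (Multiplicative (Fin p)) (Fin p → α) where
  smul k v i := v (i + k.toAdd)
  one_smul v := funext fun i => congrArg v (add_zero i)
  mul_smul k l v := funext fun i => congrArg v (add_assoc i k.toAdd l.toAdd).symm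

attribute [local instance] Fin.rotateAction

namespace Fin

variable {p : ℕ} [NeZero p] {α : Type*}

theorem rotate_smul_eq_comp (k : Multiplicative (Fin p)) (v : Fin p → α) :
    k • v = v ∘ Equiv.addRight k.toAdd :=
  rfl

theorem isPGroup_multiplicative : IsPGroup p (Multiplicative (Fin p)) :=
  IsPGroup.of_card (n := 1) (by simp)

theorem mem_fixedPoints_rotate_iff {v : Fin p → α} :
    v ∈ MulAction.fixedPoints (Multiplicative (Fin p)) (Fin p → α) ↔ ∃ c, v = fun _ => c := by
  constructor
  · intro hv
    refine ⟨v 0, funext fun i => ?_⟩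
    simpa [rotate_smul_eq_comp] using congrFun (hv (.ofAdd i)) 0
  · rintro ⟨c, rfl⟩ k
    rfl

theorem sum_rotate_smul (k : Multiplicative (Fin p)) (v : Fin p → ℕ) :
    ∑ i, (k • v) i = ∑ i, v i :=
  Equiv.sum_comp (Equiv.addRight k.toAdd) v

end Fin

theorem filter_antidiagonalTuple_mem_fixedPoints_rotate (p : ℕ) [NeZero p]
    [DecidablePred (· ∈ MulAction.fixedPoints (Multiplicative (Fin p)) (Fin p → ℕ))] (n : ℕ) :
    {v ∈ Nat.antidiagonalTuple p n |
        v ∈ MulAction.fixedPoints (Multiplicative (Fin p)) (Fin p → ℕ)} =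
      if p ∣ n then {fun _ => n / p} else ∅ := by
  ext v
  rw [mem_filter, Nat.mem_antidiagonalTuple, Fin.mem_fixedPoints_rotate_iff]
  split_ifs with hn
  · rw [mem_singleton]
    constructor
    · rintro ⟨hsum, c, rfl⟩
      rw [Fin.sum_const, smul_eq_mul] at hsum
      rw [← hsum, Nat.mul_div_cancel_left c (NeZero.pos p)]
    · rintro rfl
      exact ⟨by simp [Nat.mul_div_cancel' hn], _, rfl⟩
  · simp only [notMem_empty, iff_false]
    rintro ⟨hsum, c, rfl⟩
    rw [Fin.sum_const, smul_eq_mul] at hsum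
    exact hn ⟨c, hsum.symm⟩

theorem sum_comp_p_fold_general (p : ℕ) (hp : p.Prime)
    (R : Type*) [CommRing R] [CharP R p]
    (D : ℕ → R → R)
    (hcomm : ∀ i j : ℕ, D i ∘ D j = D j ∘ D i)
    (n : ℕ) (r : R) :
    ∑ v ∈ Finset.Nat.antidiagonalTuple p n, compList D (List.ofFn v) r =
      if p ∣ n then (D (n / p))^[p] r else 0 := by
  have := Fact.mk hp
  have : NeZero p := ⟨hp.ne_zero⟩
  classical
  have hinv : ∀ (k : Multiplicative (Fin p)) (v : Fin p → ℕ),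
      compList D (List.ofFn (k • v)) r = compList D (List.ofFn v) r := fun k v => by
    rw [Fin.rotate_smul_eq_comp, compList_perm D hcomm ((Equiv.addRight _).ofFn_comp_perm v)]
  have hstable : ∀ (k : Multiplicative (Fin p)), ∀ v ∈ Nat.antidiagonalTuple p n,
      k • v ∈ Nat.antidiagonalTuple p n := by
    simp [Nat.mem_antidiagonalTuple, Fin.sum_rotate_smul]
  rw [Fin.isPGroup_multiplicative.sum_eq_sum_filter_mem_fixedPoints hstable hinv,
    filter_antidiagonalTuple_mem_fixedPoints_rotate]
  split_ifs <;> simp [List.ofFn_const, compList_replicate]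

/-- For an HS-derivation with pairwise commuting components, on a ring of characteristic
`p`, the sum `Σ_{i₁+⋯+i_p = n} D i₁ ∘ ⋯ ∘ D i_p` equals `(D (n/p))^{(p)}` if `p ∣ n`
and `0` otherwise. -/
theorem sum_comp_p_fold (p : ℕ) (hp : p.Prime)
    (R : Type*) [CommRing R] [CharP R p]
    (D : ℕ → R → R)
    (hD : IsHSDeriv D)
    (hcomm : ∀ i j : ℕ, D i ∘ D j = D j ∘ D i)
    (n : ℕ) (r : R) :
    ∑ v ∈ Finset.Nat.antidiagonalTuple p n, compList D (List.ofFn v) r =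
      if p ∣ n then (D (n / p))^[p] r else 0 :=
  sum_comp_p_fold_general p hp R D hcomm n r
end

section
/- Let p be a prime, let R be a commutative ring of characteristic p, and let ∂ = (∂_n)_{n ∈ ℕ} be an HS-derivation on R whose components commute pairwise (∂_i ∘ ∂_j = ∂_j ∘ ∂_i for all i, j). Then the sequence (∂_n^{(p)})_{n ∈ ℕ} is again an HS-derivation on R; in particular, ∂_0^{(p)} is the identity and ∂_n^{(p)}(xy) = Σ_{i+j=n} ∂_i^{(p)}(x)·∂_j^{(p)}(y) for all n ∈ ℕ and x, y ∈ R. -/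
/-!
Write `μ : R × R → R` for multiplication and let `Λₙ = ∑_{i+j=n} (D i × D j)^*` act on functions
`R × R → R` by precomposition. The Leibniz rule says `D n ∘ μ = Λₙ μ`, and iterating it gives
`(D n)^[k] ∘ μ = Λₙ^k μ`. The summands of `Λₙ` commute because the `D i` do, and the
endomorphism ring of `R × R → R` has characteristic `p`, so the freshman's dream gives
`Λₙ^p = ∑_{i+j=n} ((D i)^[p] × (D j)^[p])^*`: this is the Leibniz rule for the `p`-fold iterates.
-/

open Finset Function

theorem Finset.sum_pow_char_of_commute {A ι : Type*} [Semiring A] (p : ℕ) [Fact p.Prime]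
    [CharP A p] (s : Finset ι) (f : ι → A) (h : ∀ i ∈ s, ∀ j ∈ s, Commute (f i) (f j)) :
    (∑ i ∈ s, f i) ^ p = ∑ i ∈ s, f i ^ p := by
  classical
  induction s using Finset.induction_on with
  | empty => simp [zero_pow (Fact.out : p.Prime).ne_zero]
  | insert a s ha ih =>
    have hs : ∀ i ∈ s, ∀ j ∈ s, Commute (f i) (f j) := fun i hi j hj =>
      h i (mem_insert_of_mem hi) j (mem_insert_of_mem hj)
    have ha' : Commute (f a) (∑ i ∈ s, f i) :=
      Commute.sum_right _ _ _ fun j hj => h a (mem_insert_self a s) j (mem_insert_of_mem hj)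
    rw [sum_insert ha, sum_insert ha, add_pow_char_of_commute p ha', ih hs]

namespace LinearMap

variable {R M α : Type*} [Semiring R] [AddCommMonoid M] [Module R M]

theorem funLeft_pow (f : α → α) (k : ℕ) : funLeft R M f ^ k = funLeft R M f^[k] := by
  induction k with
  | zero => rfl
  | succ k ih => rw [pow_succ', ih, iterate_succ, funLeft_comp, Module.End.mul_eq_comp]

theorem commute_funLeft {f g : α → α} (h : f ∘ g = g ∘ f) :
    Commute (funLeft R M f) (funLeft R M g) := by
  rw [Commute, SemiconjBy, Module.End.mul_eq_comp, Module.End.mul_eq_comp, ← funLeft_comp,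
    ← funLeft_comp, h]

end LinearMap

instance Module.End.charP_pi {R α : Type*} [CommRing R] [Nonempty α] (p : ℕ) [CharP R p] :
    CharP (Module.End R (α → R)) p :=
  Module.charP_end ⟨fun _ => 1, by
    refine (Submodule.eq_bot_iff _).2 fun r hr => ?_
    simpa using congrFun ((Ideal.mem_torsionOf_iff _ _).1 hr) (Classical.arbitrary α)⟩

section HSDeriv

variable {R : Type*} [CommRing R]

def leibnizOp (D : ℕ → R → R) (n : ℕ) : Module.End R (R × R → R) :=
  ∑ ij ∈ antidiagonal n, LinearMap.funLeft R R (Prod.map (D ij.1) (D ij.2))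

theorem leibnizOp_apply (D : ℕ → R → R) (n : ℕ) (φ : R × R → R) (x y : R) :
    leibnizOp D n φ (x, y) = ∑ ij ∈ antidiagonal n, φ (D ij.1 x, D ij.2 y) := by
  simp [leibnizOp, LinearMap.sum_apply, Finset.sum_apply]

theorem IsHSDeriv.iterate_map_add {D : ℕ → R → R} (hD : IsHSDeriv D) (n k : ℕ) (x y : R) :
    (D n)^[k] (x + y) = (D n)^[k] x + (D n)^[k] y :=
  _root_.iterate_map_add (AddMonoidHom.mk' (D n) (hD.1 n)) k x y

theorem IsHSDeriv.iterate_apply_mul {D : ℕ → R → R} (hD : IsHSDeriv D) (n k : ℕ) (x y : R) :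
    (D n)^[k] (x * y) = (leibnizOp D n ^ k) (fun z => z.1 * z.2) (x, y) := by
  induction k generalizing x y with
  | zero => rfl
  | succ k ih =>
    rw [iterate_succ_apply, hD.2.2]
    refine (map_sum (AddMonoidHom.mk' _ (hD.iterate_map_add n k)) _ _).trans ?_
    rw [pow_succ', Module.End.mul_apply, leibnizOp_apply]
    simp only [AddMonoidHom.mk'_apply, ih]

theorem leibnizOp_pow_char (p : ℕ) [Fact p.Prime] [CharP R p] {D : ℕ → R → R}
    (hcomm : ∀ i j, D i ∘ D j = D j ∘ D i) (n : ℕ) :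
    leibnizOp D n ^ p = leibnizOp (fun i => (D i)^[p]) n := by
  rw [leibnizOp, sum_pow_char_of_commute p _ _ fun i _ j _ => LinearMap.commute_funLeft <| by
    rw [Prod.map_comp_map, Prod.map_comp_map, hcomm, hcomm i.2]]
  simp only [LinearMap.funLeft_pow, Prod.map_iterate]
  rfl

end HSDeriv

/-- For an HS-derivation `D` with pairwise commuting components on a ring of
characteristic `p`, the sequence of `p`-fold compositions `((D n)^{(p)})_n` is again an
HS-derivation. -/
theorem p_fold_is_HSDeriv (p : ℕ) (hp : p.Prime)
    (R : Type*) [CommRing R] [CharP R p]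
    (D : ℕ → R → R)
    (hD : IsHSDeriv D)
    (hcomm : ∀ i j : ℕ, D i ∘ D j = D j ∘ D i) :
    IsHSDeriv (fun n => (D n)^[p]) := by
  have : Fact p.Prime := ⟨hp⟩
  refine ⟨fun n x y => ?_, fun x => ?_, fun n x y => ?_⟩
  · exact hD.iterate_map_add n p x y
  · show (D 0)^[p] x = x
    rw [show D 0 = id from funext hD.2.1, iterate_id, id]
  · beta_reduce
    rw [hD.iterate_apply_mul, leibnizOp_pow_char p hcomm, leibnizOp_apply]
end
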